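/- arXiv:1009.4510 — 5 statements merged into one kernel-verified Lean document; each statement's English description precedes it below -/
import Mathlib

section
/- Let P be a graded poset with a triple assignment τ. Then for every subset S of {1,...,n-1}, the flag h-vector entry h_S equals the number of maximal chains 0̂ = x_0 ⋖ x_1 ⋖ ... ⋖ x_n = 1̂ whose descent set {i ∈ {1,...,n-1} : τ(x_{i-1}, x_i, x_{i+1}) = b} equals S. -/
open Finset

section ChainDefs
variable {α : Type*} [PartialOrder α]

/-- `l` is a saturated (maximal) chain from `x` to `y`, given as a list. -/
def SatChain (x y : α) (l : List α) : Prop :=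
  l.Chain' (· ⋖ ·) ∧ l.head? = some x ∧ l.getLast? = some y

/-- A chain is rising for `τ` (where `true` codes the letter 𝐚 and `false` codes 𝐛)
if every consecutive triple is mapped to 𝐚. -/
def RisingOn (τ : α → α → α → Bool) (l : List α) : Prop :=
  ∀ (i : ℕ) (h : i + 2 < l.length),
    τ (l.get ⟨i, by omega⟩) (l.get ⟨i + 1, by omega⟩) (l.get ⟨i + 2, by omega⟩) = true

/-- A triple assignment: every non-trivial interval has a unique rising maximal chain. -/
def IsTripleAssignment (τ : α → α → α → Bool) : Prop :=
  ∀ x y : α, x < y → ∃! l : List α, SatChain x y l ∧ RisingOn τ l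

/-- An `R`-labeling with label set `Λ` and relation `sim`: every non-trivial interval
has a unique maximal chain whose successive labels are related by `sim`. -/
def IsRLabeling {Λ : Type*} (sim : Λ → Λ → Prop) (lab : α → α → Λ) : Prop :=
  ∀ x y : α, x < y → ∃! l : List α,
    SatChain x y l ∧ ∀ (i : ℕ) (h : i + 2 < l.length),
      sim (lab (l.get ⟨i, by omega⟩) (l.get ⟨i + 1, by omega⟩))
          (lab (l.get ⟨i + 1, by omega⟩) (l.get ⟨i + 2, by omega⟩))

/-- `y` is a breakpoint for `τ`: the value `τ x y z` does not depend on `x ⋖ y` and `y ⋖ z`. -/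
def IsBreakpoint (τ : α → α → α → Bool) (y : α) : Prop :=
  ∃ v : Bool, ∀ x z : α, x ⋖ y → y ⋖ z → τ x y z = v

end ChainDefs

section FlagDefs
variable {α : Type*} [PartialOrder α] [BoundedOrder α]

/-- `rk` is a rank function making the bounded poset graded. -/
def IsGraded (rk : α → ℕ) : Prop :=
  rk ⊥ = 0 ∧ ∀ x y : α, x ⋖ y → rk y = rk x + 1

/-- Flag `f`-vector entry: the number of chains `0̂ < x₁ < ⋯ < x_k < 1̂`
passing exactly through the ranks in `S`. -/
noncomputable def flagF (rk : α → ℕ) (S : Finset ℕ) : ℕ :=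
  Nat.card {c : Finset α // IsChain (· ≤ ·) (↑c : Set α) ∧ c.image rk = S ∧
    c.card = S.card ∧ ∀ x ∈ c, ⊥ < x ∧ x < ⊤}

/-- Flag `h`-vector entry: `h_S = ∑_{T ⊆ S} (-1)^{|S∖T|} f_T`. -/
noncomputable def flagH (rk : α → ℕ) (S : Finset ℕ) : ℤ :=
  ∑ T ∈ S.powerset, (-1) ^ (S.card - T.card) * (flagF rk T : ℤ)

/-- The descent set of a maximal chain `0̂ = x₀ ⋖ x₁ ⋖ ⋯ ⋖ x_n = 1̂` with respect to `τ`: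
those `i` with `τ (x_{i-1}) (x_i) (x_{i+1}) = 𝐛`. -/
def descSet (τ : α → α → α → Bool) (l : List α) : Finset ℕ :=
  (Finset.Icc 1 (l.length - 2)).filter
    (fun i => τ (l.getD (i - 1) ⊥) (l.getD i ⊥) (l.getD (i + 1) ⊥) = false)

end FlagDefs

/-- The butterfly poset `T_n`: one element at ranks `0` and `n` and two elements
(`side = true/false`) at each rank `1 ≤ i ≤ n-1`; any two elements of distinct
ranks are comparable. -/
structure Butt (n : ℕ) where
  rk : ℕ
  side : Bool
  hle : rk ≤ n
  hb : rk = 0 ∨ rk = n → side = false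

theorem Butt.ext' {n : ℕ} {x y : Butt n} (h1 : x.rk = y.rk) (h2 : x.side = y.side) :
    x = y := by
  cases x; cases y; simp_all

instance {n : ℕ} : PartialOrder (Butt n) where
  le x y := x = y ∨ x.rk < y.rk
  le_refl x := Or.inl rfl
  le_trans x y z hxy hyz := by
    rcases hxy with rfl | h
    · exact hyz
    · rcases hyz with rfl | h'
      · exact Or.inr h
      · exact Or.inr (h.trans h')
  le_antisymm x y hxy hyx := by
    rcases hxy with rfl | h
    · rfl
    · rcases hyx with rfl | h'
      · rfl
      · omega

instance {n : ℕ} : BoundedOrder (Butt n) where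
  bot := ⟨0, false, Nat.zero_le n, fun _ => rfl⟩
  top := ⟨n, false, le_refl n, fun _ => rfl⟩
  bot_le x := by
    by_cases h : x.rk = 0
    · exact Or.inl (Butt.ext' h.symm (x.hb (Or.inl h)).symm)
    · exact Or.inr (by simpa using Nat.pos_of_ne_zero h)
  le_top x := by
    by_cases h : x.rk = n
    · exact Or.inl (Butt.ext' h (x.hb (Or.inr h)))
    · exact Or.inr (lt_of_le_of_ne x.hle h)

/-- The poset `P_n`: two copies (`copy = true/false`) of the butterfly poset `T_n`
glued along their minimum and maximum elements. -/
structure Glue (n : ℕ) where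
  rk : ℕ
  side : Bool
  copy : Bool
  hle : rk ≤ n
  hb : rk = 0 ∨ rk = n → side = false ∧ copy = false

theorem Glue.ext' {n : ℕ} {x y : Glue n} (h1 : x.rk = y.rk) (h2 : x.side = y.side)
    (h3 : x.copy = y.copy) : x = y := by
  cases x; cases y; simp_all

instance {n : ℕ} : PartialOrder (Glue n) where
  le x y := x = y ∨ (x.rk < y.rk ∧ (x.copy = y.copy ∨ x.rk = 0 ∨ y.rk = n))
  le_refl x := Or.inl rfl
  le_trans x y z hxy hyz := by
    rcases hxy with rfl | ⟨h1, h2⟩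
    · exact hyz
    · rcases hyz with rfl | ⟨h3, h4⟩
      · exact Or.inr ⟨h1, h2⟩
      · refine Or.inr ⟨h1.trans h3, ?_⟩
        rcases h2 with hc | h0 | hn
        · rcases h4 with hc' | h0' | hn'
          · exact Or.inl (hc.trans hc')
          · omega
          · exact Or.inr (Or.inr hn')
        · exact Or.inr (Or.inl h0)
        · have := z.hle; omega
  le_antisymm x y hxy hyx := by
    rcases hxy with rfl | ⟨h1, _⟩
    · rfl
    · rcases hyx with rfl | ⟨h2, _⟩
      · rfl
      · omega

instance {n : ℕ} : BoundedOrder (Glue n) where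
  bot := ⟨0, false, false, Nat.zero_le n, fun _ => ⟨rfl, rfl⟩⟩
  top := ⟨n, false, false, le_refl n, fun _ => ⟨rfl, rfl⟩⟩
  bot_le x := by
    by_cases h : x.rk = 0
    · exact Or.inl (Glue.ext' h.symm (x.hb (Or.inl h)).1.symm (x.hb (Or.inl h)).2.symm)
    · exact Or.inr ⟨by simpa using Nat.pos_of_ne_zero h, Or.inr (Or.inl rfl)⟩
  le_top x := by
    by_cases h : x.rk = n
    · exact Or.inl (Glue.ext' h (x.hb (Or.inr h)).1 (x.hb (Or.inr h)).2)
    · exact Or.inr ⟨lt_of_le_of_ne x.hle h, Or.inr (Or.inr rfl)⟩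

/-- Eulerian condition (counting form): every non-trivial interval has as many
elements of even rank as of odd rank. -/
def EulerianCount {α : Type*} [PartialOrder α] (rk : α → ℕ) : Prop :=
  ∀ x y : α, x < y →
    Nat.card {z : α // z ∈ Set.Icc x y ∧ Even (rk z - rk x)} =
    Nat.card {z : α // z ∈ Set.Icc x y ∧ ¬ Even (rk z - rk x)}

section AbIndex

/-- The variable 𝐚 of the non-commutative polynomial ring `ℤ⟨𝐚,𝐛⟩`,
realized as the monoid algebra of the free monoid on two letters. -/
noncomputable def abA : MonoidAlgebra ℤ (FreeMonoid Bool) :=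
  MonoidAlgebra.single (FreeMonoid.ofList [true]) 1

/-- The variable 𝐛. -/
noncomputable def abB : MonoidAlgebra ℤ (FreeMonoid Bool) :=
  MonoidAlgebra.single (FreeMonoid.ofList [false]) 1

/-- The 𝐚𝐛-monomial `u_S` of length `n-1`, with 𝐛 in the positions of `S`. -/
def abMonomial (n : ℕ) (S : Finset ℕ) : FreeMonoid Bool :=
  FreeMonoid.ofList ((List.range (n - 1)).map (fun j => decide ((j + 1) ∉ S)))

/-- The 𝐚𝐛-index `Ψ(P) = ∑_S h_S u_S` of a bounded poset of rank `n`
with rank function `rk`. -/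
noncomputable def abIndex {α : Type*} [PartialOrder α] [BoundedOrder α]
    (rk : α → ℕ) (n : ℕ) : MonoidAlgebra ℤ (FreeMonoid Bool) :=
  ∑ S ∈ (Finset.Icc 1 (n - 1)).powerset,
    MonoidAlgebra.single (abMonomial n S) (flagH rk S)

/-- The weight `wt(c)` of a maximal chain, as an 𝐚𝐛-monomial. -/
def chainWeight {α : Type*} [PartialOrder α] [OrderBot α]
    (τ : α → α → α → Bool) (l : List α) : FreeMonoid Bool :=
  FreeMonoid.ofList ((List.range (l.length - 2)).map
    (fun i => τ (l.getD i ⊥) (l.getD (i + 1) ⊥) (l.getD (i + 2) ⊥)))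

end AbIndex

/-!
A maximal chain whose descents all lie in `T` is determined by its elements with rank in `T`:
between two consecutive ones it has no descent, so it is the unique rising chain of that interval.
Conversely, concatenating these rising chains along any chain with rank set `T` gives a maximal
chain with descents in `T`. Hence `f_T` counts the maximal chains with descent set contained in `T`,
and Möbius inversion on the Boolean lattice of subsets of `S` gives `h_S`.
-/

namespace List

variable {α : Type*}

theorem getD_mem {l : List α} {i : ℕ} (hi : i < l.length) (d : α) : l.getD i d ∈ l := by
  rw [getD_eq_getElem _ _ hi]; exact getElem_mem hi

theorem exists_getD_eq_of_mem {l : List α} {z : α} (hz : z ∈ l) (d : α) :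
    ∃ i < l.length, l.getD i d = z := by
  obtain ⟨i, hi, rfl⟩ := mem_iff_getElem.mp hz
  exact ⟨i, hi, getD_eq_getElem _ _ hi⟩

end List

namespace SatChain

variable {α : Type*} [PartialOrder α] {x y z : α} {l l₁ l₂ : List α}

theorem exists_eq_cons (h : SatChain x y l) : ∃ t, l = x :: t := by
  obtain ⟨-, h₀, -⟩ := h
  cases l with
  | nil => simp at h₀
  | cons a t => exact ⟨t, by simpa using h₀⟩

theorem length_pos (h : SatChain x y l) : 0 < l.length := by
  obtain ⟨t, rfl⟩ := h.exists_eq_cons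
  exact Nat.succ_pos _

theorem getD_zero (h : SatChain x y l) (d : α) : l.getD 0 d = x := by
  obtain ⟨t, rfl⟩ := h.exists_eq_cons
  rfl

theorem getD_length_sub_one (h : SatChain x y l) (d : α) : l.getD (l.length - 1) d = y := by
  have hlast := h.2.2
  rw [List.getLast?_eq_getElem?] at hlast
  rw [List.getD_eq_getElem?_getD, hlast, Option.getD_some]

theorem mem_right (h : SatChain x y l) : y ∈ l := by
  rw [← h.getD_length_sub_one y]
  exact List.getD_mem (by have := h.length_pos; omega) y

theorem covBy_getD (h : SatChain x y l) (d : α) {i : ℕ} (hi : i + 1 < l.length) :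
    l.getD i d ⋖ l.getD (i + 1) d := by
  rw [List.getD_eq_getElem _ _ (by omega), List.getD_eq_getElem _ _ hi]
  exact List.isChain_iff_getElem.mp h.1 i hi

theorem pairwise_lt (h : SatChain x y l) : l.Pairwise (· < ·) :=
  List.isChain_iff_pairwise.mp (h.1.imp fun _ _ hab => hab.lt)

theorem getD_lt_getD (h : SatChain x y l) (d : α) {i j : ℕ} (hij : i < j) (hj : j < l.length) :
    l.getD i d < l.getD j d := by
  rw [List.getD_eq_getElem _ _ (by omega), List.getD_eq_getElem _ _ hj]
  exact List.pairwise_iff_getElem.mp h.pairwise_lt i j (by omega) hj hij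

theorem getD_le_getD (h : SatChain x y l) (d : α) {i j : ℕ} (hij : i ≤ j) (hj : j < l.length) :
    l.getD i d ≤ l.getD j d := by
  rcases hij.eq_or_lt with rfl | hij
  · rfl
  · exact (h.getD_lt_getD d hij hj).le

theorem getD_ne_left (h : SatChain x y l) (d : α) {i : ℕ} (hi₀ : 0 < i) (hi : i < l.length) :
    l.getD i d ≠ x := by
  simpa only [h.getD_zero] using (h.getD_lt_getD d hi₀ hi).ne'

theorem getD_ne_right (h : SatChain x y l) (d : α) {i : ℕ} (hi : i + 1 < l.length) :
    l.getD i d ≠ y := by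
  simpa only [h.getD_length_sub_one] using (h.getD_lt_getD d (by omega : i < l.length - 1)
    (by omega)).ne

theorem le_total_of_mem (h : SatChain x y l) {a b : α} (ha : a ∈ l) (hb : b ∈ l) :
    a ≤ b ∨ b ≤ a := by
  obtain ⟨i, hi, rfl⟩ := List.exists_getD_eq_of_mem ha x
  obtain ⟨j, hj, rfl⟩ := List.exists_getD_eq_of_mem hb x
  exact (le_total i j).imp (fun hij => h.getD_le_getD x hij hj) fun hji => h.getD_le_getD x hji hi

theorem le_of_mem (h : SatChain x y l) (hz : z ∈ l) : x ≤ z ∧ z ≤ y := by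
  obtain ⟨i, hi, rfl⟩ := List.exists_getD_eq_of_mem hz x
  constructor
  · simpa only [h.getD_zero] using h.getD_le_getD x (Nat.zero_le i) hi
  · simpa only [h.getD_length_sub_one] using h.getD_le_getD x (by omega : i ≤ l.length - 1)
      (by omega)

theorem le (h : SatChain x y l) : x ≤ y := by
  obtain ⟨t, rfl⟩ := h.exists_eq_cons
  exact (h.le_of_mem List.mem_cons_self).2

theorem eq_singleton (h : SatChain x x l) : l = [x] := by
  obtain ⟨t, rfl⟩ := h.exists_eq_cons
  cases t with
  | nil => rfl
  | cons a t => exact absurd (h.getD_length_sub_one x) (h.getD_ne_left x (by simp) (by simp))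

theorem rank_getD {rk : α → ℕ} (hrk : ∀ a b : α, a ⋖ b → rk b = rk a + 1)
    (h : SatChain x y l) (d : α) : ∀ i < l.length, rk (l.getD i d) = rk x + i
  | 0, _ => by rw [h.getD_zero, Nat.add_zero]
  | i + 1, hi => by rw [hrk _ _ (h.covBy_getD d hi), h.rank_getD hrk d i (by omega), Nat.add_assoc]

theorem rank_add_length {rk : α → ℕ} (hrk : ∀ a b : α, a ⋖ b → rk b = rk a + 1)
    (h : SatChain x y l) : rk x + l.length = rk y + 1 := by
  have := h.rank_getD hrk x (l.length - 1) (by have := h.length_pos; omega)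
  rw [h.getD_length_sub_one] at this
  have := h.length_pos
  omega

theorem take (h : SatChain x y l) (d : α) {j : ℕ} (hj : j < l.length) :
    SatChain x (l.getD j d) (l.take (j + 1)) := by
  refine ⟨h.1.take _, ?_, ?_⟩
  · simpa [List.head?_take] using h.2.1
  · simp [List.getLast?_take, List.getD_eq_getElem?_getD, List.getElem?_eq_getElem hj]

theorem drop (h : SatChain x y l) (d : α) {j : ℕ} (hj : j < l.length) :
    SatChain (l.getD j d) y (l.drop j) := by
  refine ⟨h.1.drop _, ?_, ?_⟩
  · simp [List.getD_eq_getElem?_getD, List.getElem?_eq_getElem hj]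
  · simpa [List.getLast?_drop, hj.not_ge] using h.2.2

theorem append (h₁ : SatChain x z l₁) (h₂ : SatChain z y l₂) :
    SatChain x y (l₁ ++ l₂.tail) := by
  obtain ⟨t, rfl⟩ := h₂.exists_eq_cons
  obtain ⟨hc₁, hhead₁, hlast₁⟩ := h₁
  obtain ⟨hc₂, -, hlast₂⟩ := h₂
  refine ⟨List.isChain_append.mpr ⟨hc₁, hc₂.tail, ?_⟩, ?_, ?_⟩
  · intro a ha b hb
    cases t with
    | nil => simp at hb
    | cons c t =>
      simp only [hlast₁, List.tail_cons, List.head?_cons, Option.mem_def, Option.some_inj] at ha hb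
      exact ha ▸ hb ▸ (List.isChain_cons_cons.mp hc₂).1
  · simp [List.head?_append, hhead₁]
  · cases ht : t.getLast? <;> simp_all [List.getLast?_append, List.getLast?_cons]

theorem getD_append_tail (h₁ : SatChain x z l₁) (h₂ : SatChain z y l₂) (d : α) (q : ℕ) :
    (l₁ ++ l₂.tail).getD (l₁.length - 1 + q) d = l₂.getD q d := by
  obtain ⟨t, rfl⟩ := h₂.exists_eq_cons
  have := h₁.length_pos
  cases q with
  | zero =>
    rw [Nat.add_zero, List.getD_append _ _ _ _ (by omega), h₁.getD_length_sub_one]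
    rfl
  | succ q =>
    rw [List.getD_append_right _ _ _ _ (by omega), List.tail_cons, List.getD_cons_succ]
    congr 1
    omega

theorem finite_setOf [Finite α] (x y : α) :
    {l : List α | SatChain x y l}.Finite :=
  (List.finite_length_le α (Nat.card α)).subset fun _ hl =>
    (List.Pairwise.nodup (pairwise_lt hl)).length_le_natCard

end SatChain

section Rising

variable {α : Type*} {τ : α → α → α → Bool} {l : List α}

theorem risingOn_iff_getD (d : α) :
    RisingOn τ l ↔ ∀ p, p + 2 < l.length →
      τ (l.getD p d) (l.getD (p + 1) d) (l.getD (p + 2) d) = true := by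
  refine forall_congr' fun p => forall_congr' fun hp => ?_
  rw [List.getD_eq_getElem _ _ (by omega), List.getD_eq_getElem _ _ (by omega),
    List.getD_eq_getElem _ _ hp]
  rfl

/-- The default `d` is never read: all indices involved are in range. -/
def RisingOff (τ : α → α → α → Bool) (zs l : List α) (d : α) : Prop :=
  ∀ p, p + 2 < l.length → l.getD (p + 1) d ∉ zs →
    τ (l.getD p d) (l.getD (p + 1) d) (l.getD (p + 2) d) = true

theorem risingOff_nil_iff (d : α) : RisingOff τ [] l d ↔ RisingOn τ l := by
  simp [RisingOff, risingOn_iff_getD d]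

end Rising

section RisingChains

variable {α : Type*} [PartialOrder α] {τ : α → α → α → Bool} {x y : α} {l : List α}

open Classical in
/-- For `¬ x < y` this is the junk value `[x]`, which is the right one when `x = y`. -/
noncomputable def risingChain (hτ : IsTripleAssignment τ) (x y : α) : List α :=
  if h : x < y then (hτ x y h).exists.choose else [x]

variable (hτ : IsTripleAssignment τ)
include hτ

theorem risingChain_spec (hxy : x ≤ y) :
    SatChain x y (risingChain hτ x y) ∧ RisingOn τ (risingChain hτ x y) := by
  rcases hxy.eq_or_lt with rfl | h
  · rw [risingChain, dif_neg (lt_irrefl x)]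
    exact ⟨⟨List.isChain_singleton x, rfl, rfl⟩, fun i hi => by simp at hi⟩
  · rw [risingChain, dif_pos h]
    exact (hτ x y h).exists.choose_spec

theorem eq_risingChain (hl : SatChain x y l) (hr : RisingOn τ l) : l = risingChain hτ x y := by
  rcases hl.le.eq_or_lt with rfl | h
  · rw [risingChain, dif_neg (lt_irrefl x)]
    exact hl.eq_singleton
  · exact (hτ x y h).unique ⟨hl, hr⟩ (risingChain_spec hτ h.le)

end RisingChains

section ChainThrough

variable {α : Type*} [PartialOrder α] {τ : α → α → α → Bool} {x y z : α} {zs l l₁ l₂ : List α}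

theorem risingOff_cons_append_iff (h₁ : SatChain x z l₁) (h₂ : SatChain z y l₂)
    (hzs : ∀ w ∈ zs, w ∉ l₁) (d : α) :
    RisingOff τ (z :: zs) (l₁ ++ l₂.tail) d ↔ RisingOn τ l₁ ∧ RisingOff τ zs l₂ d := by
  obtain ⟨k, hk₁⟩ : ∃ k, l₁.length = k + 1 := ⟨l₁.length - 1, by have := h₁.length_pos; omega⟩
  have hl₂ := h₂.length_pos
  have hlen : (l₁ ++ l₂.tail).length = k + l₂.length := by
    simp only [List.length_append, List.length_tail]; omega
  have hleft : ∀ p ≤ k, (l₁ ++ l₂.tail).getD p d = l₁.getD p d := fun p hp =>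
    List.getD_append _ _ _ _ (by omega)
  have hright : ∀ q, (l₁ ++ l₂.tail).getD (k + q) d = l₂.getD q d := fun q => by
    simpa only [hk₁, Nat.add_sub_cancel] using h₁.getD_append_tail h₂ d q
  have hmid₁ : ∀ p < k, l₁.getD p d ∉ z :: zs := fun p hp hmem =>
    (List.mem_cons.mp hmem).elim (h₁.getD_ne_right d (by omega))
      fun hmem => hzs _ hmem (List.getD_mem (by omega) d)
  rw [risingOn_iff_getD d]
  constructor
  · intro H
    refine ⟨fun p hp => ?_, fun q hq hm => ?_⟩
    · have := H p (by omega) (by rw [hleft _ (by omega)]; exact hmid₁ _ (by omega))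
      rwa [hleft _ (by omega), hleft _ (by omega), hleft _ (by omega)] at this
    · have := H (k + q) (by omega) (by
        rw [Nat.add_assoc, hright]
        exact fun hmem => (List.mem_cons.mp hmem).elim (h₂.getD_ne_left d (Nat.succ_pos q) (by omega)) hm)
      rwa [Nat.add_assoc, Nat.add_assoc, hright, hright, hright] at this
  · rintro ⟨H₁, H₂⟩ p hp hm
    rcases Nat.lt_or_ge (p + 2) (k + 1) with hp₁ | hp₁
    · rw [hleft _ (by omega), hleft _ (by omega), hleft _ (by omega)]
      exact H₁ p (by omega)
    · rcases Nat.lt_or_ge p k with hp₂ | hp₂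
      · have hpk : p + 1 = k := by omega
        rw [hpk, show k = k + 0 from rfl, hright, h₂.getD_zero] at hm
        exact (hm List.mem_cons_self).elim
      · obtain ⟨q, rfl⟩ := Nat.exists_eq_add_of_le hp₂
        rw [Nat.add_assoc, hright] at hm
        rw [Nat.add_assoc, Nat.add_assoc, hright, hright, hright]
        exact H₂ q (by omega) fun hmem => hm (List.mem_cons_of_mem z hmem)

variable (hτ : IsTripleAssignment τ)

noncomputable def chainThrough : α → List α → α → List α
  | x, [], y => risingChain hτ x y
  | x, z :: zs, y => risingChain hτ x z ++ (chainThrough z zs y).tail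

include hτ

theorem satChain_chainThrough :
    ∀ {x zs}, (x :: zs).Pairwise (· < ·) → (∀ w ∈ x :: zs, w ≤ y) →
      SatChain x y (chainThrough hτ x zs y)
  | x, [], _, hle => (risingChain_spec hτ (hle x List.mem_cons_self)).1
  | x, _ :: _, hpw, hle =>
    (risingChain_spec hτ (List.rel_of_pairwise_cons hpw List.mem_cons_self).le).1.append
      (satChain_chainThrough hpw.of_cons fun w hw => hle w (List.mem_cons_of_mem x hw))

theorem mem_chainThrough :
    ∀ {x zs}, (x :: zs).Pairwise (· < ·) → (∀ w ∈ x :: zs, w ≤ y) →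
      ∀ w ∈ zs, w ∈ chainThrough hτ x zs y
  | x, z :: zs, hpw, hle, w, hw => by
    have hle' : ∀ v ∈ z :: zs, v ≤ y := fun v hv => hle v (List.mem_cons_of_mem x hv)
    have hzr := (risingChain_spec hτ (List.rel_of_pairwise_cons hpw List.mem_cons_self).le).1
    obtain ⟨t, ht⟩ := (satChain_chainThrough hτ hpw.of_cons hle').exists_eq_cons
    rw [chainThrough, ht, List.tail_cons, List.mem_append]
    by_cases hwz : w = z
    · exact Or.inl (hwz ▸ hzr.mem_right)
    · have := mem_chainThrough hpw.of_cons hle' w ((List.mem_cons.mp hw).resolve_left hwz)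
      rw [ht] at this
      exact Or.inr ((List.mem_cons.mp this).resolve_left hwz)

theorem risingOff_chainThrough (d : α) :
    ∀ {x zs}, (x :: zs).Pairwise (· < ·) → (∀ w ∈ x :: zs, w ≤ y) →
      RisingOff τ zs (chainThrough hτ x zs y) d
  | x, [], _, hle => (risingOff_nil_iff d).mpr (risingChain_spec hτ (hle x List.mem_cons_self)).2
  | x, z :: zs, hpw, hle => by
    have hle' : ∀ v ∈ z :: zs, v ≤ y := fun v hv => hle v (List.mem_cons_of_mem x hv)
    have hxz := List.rel_of_pairwise_cons hpw List.mem_cons_self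
    have hzs : ∀ w ∈ zs, w ∉ risingChain hτ x z := fun w hw hw' =>
      ((risingChain_spec hτ hxz.le).1.le_of_mem hw').2.not_gt
        (List.rel_of_pairwise_cons hpw.of_cons hw)
    exact (risingOff_cons_append_iff (risingChain_spec hτ hxz.le).1
      (satChain_chainThrough hτ hpw.of_cons hle') hzs d).mpr
      ⟨(risingChain_spec hτ hxz.le).2, risingOff_chainThrough d hpw.of_cons hle'⟩

theorem eq_chainThrough (d : α) :
    ∀ {x zs l}, (x :: zs).Pairwise (· < ·) → SatChain x y l → (∀ w ∈ zs, w ∈ l) →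
      RisingOff τ zs l d → l = chainThrough hτ x zs y
  | x, [], l, _, hl, _, hr => eq_risingChain hτ hl ((risingOff_nil_iff d).mp hr)
  | x, z :: zs, l, hpw, hl, hmem, hr => by
    obtain ⟨j, hj, hzj⟩ := List.exists_getD_eq_of_mem (hmem z List.mem_cons_self) d
    have h₁ : SatChain x z (l.take (j + 1)) := hzj ▸ hl.take d hj
    have h₂ : SatChain z y (l.drop j) := hzj ▸ hl.drop d hj
    have hsplit : l = l.take (j + 1) ++ (l.drop j).tail := by
      rw [List.tail_drop, List.take_append_drop]
    have hzs : ∀ w ∈ zs, w ∉ l.take (j + 1) := fun w hw hw' =>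
      (h₁.le_of_mem hw').2.not_gt (List.rel_of_pairwise_cons hpw.of_cons hw)
    rw [hsplit] at hr
    obtain ⟨hr₁, hr₂⟩ := (risingOff_cons_append_iff h₁ h₂ hzs d).mp hr
    have hmem₂ : ∀ w ∈ zs, w ∈ l.drop j := by
      intro w hw
      have := hmem w (List.mem_cons_of_mem z hw)
      rw [hsplit, List.mem_append] at this
      exact List.mem_of_mem_tail (this.resolve_left (hzs w hw))
    rw [hsplit, eq_risingChain hτ h₁ hr₁, eq_chainThrough d hpw.of_cons h₂ hmem₂ hr₂]
    rfl

end ChainThrough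

theorem Finset.exists_list_pairwise_lt_of_isChain {α : Type*} [PartialOrder α] (c : Finset α)
    (hc : IsChain (· ≤ ·) (c : Set α)) : ∃ l : List α, l.Pairwise (· < ·) ∧ ∀ a, a ∈ l ↔ a ∈ c := by
  classical
  induction c using Finset.strongInduction with
  | H c ih =>
  obtain rfl | hne := c.eq_empty_or_nonempty
  · exact ⟨[], List.Pairwise.nil, by simp⟩
  obtain ⟨m, hm, hmin⟩ := c.exists_minimal hne
  obtain ⟨l, hl, hmem⟩ := ih _ (c.erase_ssubset hm) (hc.mono (by simp))
  refine ⟨m :: l, List.pairwise_cons.mpr ⟨fun a ha => ?_, hl⟩, fun a => ?_⟩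
  · obtain ⟨ham, hac⟩ := Finset.mem_erase.mp ((hmem a).mp ha)
    exact (hc.total hm hac).elim (fun h => h.lt_of_ne (Ne.symm ham))
      fun h => (ham ((hmin hac h).antisymm h).symm).elim
  · rw [List.mem_cons, hmem, Finset.mem_erase]
    by_cases ham : a = m
    · simp [ham, hm]
    · simp [ham]

section Graded

variable {α : Type*} [PartialOrder α] [BoundedOrder α] {rk : α → ℕ} {τ : α → α → α → Bool}
  {y : α} {zs l : List α} {T : Finset ℕ}

namespace SatChain

theorem rank_getD_of_isGraded (hg : IsGraded rk) (h : SatChain ⊥ y l) (d : α) {i : ℕ}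
    (hi : i < l.length) : rk (l.getD i d) = i := by
  rw [h.rank_getD hg.2 d i hi, hg.1, Nat.zero_add]

theorem length_of_isGraded (hg : IsGraded rk) (h : SatChain ⊥ y l) : l.length = rk y + 1 := by
  simpa [hg.1] using h.rank_add_length hg.2

theorem eq_of_rank_eq (hg : IsGraded rk) (h : SatChain ⊥ y l) {a b : α} (ha : a ∈ l)
    (hb : b ∈ l) (hab : rk a = rk b) : a = b := by
  obtain ⟨i, hi, rfl⟩ := List.exists_getD_eq_of_mem ha ⊥
  obtain ⟨j, hj, rfl⟩ := List.exists_getD_eq_of_mem hb ⊥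
  rw [h.rank_getD_of_isGraded hg ⊥ hi, h.rank_getD_of_isGraded hg ⊥ hj] at hab
  rw [hab]

end SatChain

theorem descSet_subset_iff_risingOff (hg : IsGraded rk) (h : SatChain ⊥ y l)
    (hzs : ∀ z ∈ l, z ∈ zs ↔ rk z ∈ T) : descSet τ l ⊆ T ↔ RisingOff τ zs l ⊥ := by
  have hmid : ∀ p, p + 2 < l.length → (l.getD (p + 1) ⊥ ∈ zs ↔ p + 1 ∈ T) := fun p hp => by
    rw [hzs _ (List.getD_mem (by omega) ⊥), h.rank_getD_of_isGraded hg ⊥ (by omega)]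
  simp only [descSet, RisingOff, Finset.subset_iff, Finset.mem_filter, Finset.mem_Icc]
  constructor
  · intro H p hp hm
    by_contra hf
    exact hm ((hmid p hp).mpr (H ⟨⟨by omega, by omega⟩, by simpa using hf⟩))
  · rintro H i ⟨⟨hi₁, hi₂⟩, hf⟩
    obtain ⟨p, rfl⟩ : ∃ p, i = p + 1 := ⟨i - 1, by omega⟩
    by_contra hi
    have := H p (by omega) fun hm => hi ((hmid p (by omega)).mp hm)
    simp_all

end Graded

section FlagChains

variable {α : Type*} [PartialOrder α] [BoundedOrder α] {rk : α → ℕ} {τ : α → α → α → Bool}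
  {l : List α} {T : Finset ℕ}

/-- `flagF rk T` is by definition the number of such `c`. -/
def IsChainOfRankSet (rk : α → ℕ) (T : Finset ℕ) (c : Finset α) : Prop :=
  IsChain (· ≤ ·) (c : Set α) ∧ c.image rk = T ∧ c.card = T.card ∧ ∀ x ∈ c, ⊥ < x ∧ x < ⊤

theorem isChainOfRankSet_filter [DecidableEq α] (hg : IsGraded rk)
    (hT : T ⊆ Finset.Icc 1 (rk ⊤ - 1)) (h : SatChain ⊥ ⊤ l) :
    IsChainOfRankSet rk T (l.toFinset.filter (rk · ∈ T)) := by
  have hlen := h.length_of_isGraded hg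
  have himage : (l.toFinset.filter (rk · ∈ T)).image rk = T := by
    ext t
    simp only [Finset.mem_image, Finset.mem_filter, List.mem_toFinset]
    refine ⟨fun ⟨_, ⟨_, hw⟩, hwt⟩ => hwt ▸ hw, fun ht => ?_⟩
    have ht' := Finset.mem_Icc.mp (hT ht)
    have hrank := h.rank_getD_of_isGraded hg ⊥ (show t < l.length by omega)
    exact ⟨l.getD t ⊥, ⟨List.getD_mem (by omega) ⊥, by rwa [hrank]⟩, hrank⟩
  refine ⟨?_, himage, ?_, fun x hx => ?_⟩
  · intro a ha b hb _
    simp only [Finset.coe_filter, List.mem_toFinset] at ha hb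
    exact h.le_total_of_mem ha.1 hb.1
  · refine (Finset.card_image_of_injOn fun a ha b hb hab => ?_).symm.trans (by rw [himage])
    simp only [Finset.coe_filter, List.mem_toFinset] at ha hb
    exact h.eq_of_rank_eq hg ha.1 hb.1 hab
  · obtain ⟨hxl, hxT⟩ : x ∈ l ∧ rk x ∈ T := by simpa using hx
    have hxT' := Finset.mem_Icc.mp (hT hxT)
    refine ⟨(h.le_of_mem hxl).1.lt_of_ne ?_, (h.le_of_mem hxl).2.lt_of_ne ?_⟩ <;> rintro rfl
    · rw [hg.1] at hxT'
      omega
    · omega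

variable (hτ : IsTripleAssignment τ)
include hτ

theorem eq_chainThrough_filter (hg : IsGraded rk) (h0 : 0 ∉ T) (h : SatChain ⊥ ⊤ l)
    (hd : descSet τ l ⊆ T) : l = chainThrough hτ ⊥ (l.filter (rk · ∈ T)) ⊤ := by
  have hmem : ∀ z, z ∈ l.filter (rk · ∈ T) ↔ z ∈ l ∧ rk z ∈ T := by simp
  refine eq_chainThrough hτ ⊥ ?_ h (fun w hw => ((hmem w).mp hw).1)
    ((descSet_subset_iff_risingOff hg h fun z hz => by simp [hmem, hz]).mp hd)
  refine List.pairwise_cons.mpr ⟨fun w hw => bot_lt_iff_ne_bot.mpr ?_,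
    h.pairwise_lt.sublist List.filter_sublist⟩
  rintro rfl
  exact h0 (hg.1 ▸ ((hmem ⊥).mp hw).2)

theorem exists_satChain_filter_eq [DecidableEq α] (hg : IsGraded rk) (c : Finset α)
    (hc : IsChainOfRankSet rk T c) :
    ∃ l, SatChain ⊥ ⊤ l ∧ descSet τ l ⊆ T ∧ l.toFinset.filter (rk · ∈ T) = c := by
  obtain ⟨zs, hzs, hzc⟩ := c.exists_list_pairwise_lt_of_isChain hc.1
  have hpw : (⊥ :: zs).Pairwise (· < ·) :=
    List.pairwise_cons.mpr ⟨fun w hw => (hc.2.2.2 w ((hzc w).mp hw)).1, hzs⟩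
  have hle : ∀ w ∈ ⊥ :: zs, w ≤ ⊤ := fun _ _ => le_top
  have hl := satChain_chainThrough hτ hpw hle
  have hcl : ∀ w ∈ c, w ∈ chainThrough hτ ⊥ zs ⊤ := fun w hw =>
    mem_chainThrough hτ hpw hle w ((hzc w).mpr hw)
  have hrank : ∀ z ∈ chainThrough hτ ⊥ zs ⊤, z ∈ c ↔ rk z ∈ T := by
    intro z hz
    rw [← hc.2.1]
    refine ⟨Finset.mem_image_of_mem rk, fun hz' => ?_⟩
    obtain ⟨v, hv, hvz⟩ := Finset.mem_image.mp hz'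
    rwa [← hl.eq_of_rank_eq hg (hcl v hv) hz hvz]
  refine ⟨_, hl, (descSet_subset_iff_risingOff hg hl fun z hz => (hzc z).trans (hrank z hz)).mpr
    (risingOff_chainThrough hτ ⊥ hpw hle), ?_⟩
  ext w
  simp only [Finset.mem_filter, List.mem_toFinset]
  exact ⟨fun ⟨hw, hwT⟩ => (hrank w hw).mpr hwT, fun hw => ⟨hcl w hw, (hrank w (hcl w hw)).mp hw⟩⟩

theorem flagF_eq_natCard_descSet_subset (hg : IsGraded rk) (hT : T ⊆ Finset.Icc 1 (rk ⊤ - 1)) :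
    flagF rk T = Nat.card {l : List α // SatChain ⊥ ⊤ l ∧ descSet τ l ⊆ T} := by
  classical
  have h0 : 0 ∉ T := fun h => by simpa using hT h
  refine (Nat.card_congr (Equiv.ofBijective
    (fun l : {l : List α // SatChain ⊥ ⊤ l ∧ descSet τ l ⊆ T} =>
      (⟨l.1.toFinset.filter (rk · ∈ T), isChainOfRankSet_filter hg hT l.2.1⟩ :
        {c // IsChainOfRankSet rk T c})) ⟨?_, ?_⟩)).symm
  · rintro ⟨l₁, h₁, hd₁⟩ ⟨l₂, h₂, hd₂⟩ he
    have hfilter : l₁.filter (rk · ∈ T) = l₂.filter (rk · ∈ T) :=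
      (h₁.pairwise_lt.sublist List.filter_sublist).eq_of_mem_iff
        (h₂.pairwise_lt.sublist List.filter_sublist) fun a => by
          simpa using Finset.ext_iff.mp (congrArg Subtype.val he) a
    refine Subtype.ext (show l₁ = l₂ from ?_)
    rw [eq_chainThrough_filter hτ hg h0 h₁ hd₁, eq_chainThrough_filter hτ hg h0 h₂ hd₂, hfilter]
  · rintro ⟨c, hc⟩
    obtain ⟨l, hl, hd, rfl⟩ := exists_satChain_filter_eq hτ hg c hc
    exact ⟨⟨l, hl, hd⟩, rfl⟩

end FlagChains

theorem Finset.sum_powerset_neg_one_pow_mul_ite_subset {β : Type*} [DecidableEq β]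
    (R S : Finset β) :
    ∑ T ∈ S.powerset, (-1 : ℤ) ^ (S.card - T.card) * (if R ⊆ T then 1 else 0) =
      if R = S then 1 else 0 := by
  simp only [mul_ite, mul_one, mul_zero]
  rw [← Finset.sum_filter]
  by_cases hRS : R ⊆ S
  · have hcompl : ∑ T ∈ S.powerset with R ⊆ T, (-1 : ℤ) ^ (S.card - T.card) =
        ∑ U ∈ (S \ R).powerset, (-1 : ℤ) ^ U.card := by
      refine Finset.sum_nbij' (S \ ·) (S \ ·) (fun T hT => ?_) (fun U hU => ?_)
        (fun T hT => ?_) (fun U hU => ?_) (fun T hT => ?_)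
      · simp only [Finset.mem_filter, Finset.mem_powerset] at hT ⊢
        exact Finset.sdiff_subset_sdiff subset_rfl hT.2
      · simp only [Finset.mem_filter, Finset.mem_powerset] at hU ⊢
        exact ⟨Finset.sdiff_subset, fun r hr => Finset.mem_sdiff.mpr
          ⟨hRS hr, fun hrU => (Finset.mem_sdiff.mp (hU hrU)).2 hr⟩⟩
      · exact Finset.sdiff_sdiff_eq_self (Finset.mem_powerset.mp (Finset.mem_filter.mp hT).1)
      · exact Finset.sdiff_sdiff_eq_self ((Finset.mem_powerset.mp hU).trans Finset.sdiff_subset)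
      · rw [Finset.card_sdiff_of_subset (Finset.mem_powerset.mp (Finset.mem_filter.mp hT).1)]
    rw [hcompl, Finset.sum_powerset_neg_one_pow_card]
    exact if_congr (Finset.sdiff_eq_empty_iff_subset.trans ⟨hRS.antisymm, fun h => h ▸ subset_rfl⟩)
      rfl rfl
  · rw [Finset.sum_eq_zero fun T hT => ?_, if_neg fun h => hRS h.le]
    simp only [Finset.mem_filter, Finset.mem_powerset] at hT
    exact (hRS (hT.2.trans hT.1)).elim

theorem natCard_eq_sum_powerset_natCard_subset {γ β : Type*} [DecidableEq β] {P : γ → Prop}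
    (hP : {x | P x}.Finite) (D : γ → Finset β) (S : Finset β) :
    (Nat.card {x // P x ∧ D x = S} : ℤ) =
      ∑ T ∈ S.powerset, (-1) ^ (S.card - T.card) * (Nat.card {x // P x ∧ D x ⊆ T} : ℤ) := by
  classical
  have hcard : ∀ Q : γ → Prop, Nat.card {x // P x ∧ Q x} = (hP.toFinset.filter Q).card := by
    intro Q
    rw [← Set.ncard_coe_finset, ← Nat.card_coe_set_eq]
    congr
    ext x
    simp
  simp only [hcard, Finset.card_filter, Nat.cast_sum, Nat.cast_ite, Nat.cast_one, Nat.cast_zero,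
    Finset.mul_sum]
  rw [Finset.sum_comm]
  exact Finset.sum_congr rfl fun x _ => (Finset.sum_powerset_neg_one_pow_mul_ite_subset _ _).symm

/-- For a graded poset `P` with a triple assignment `τ`, the flag `h`-vector
entry `h_S` equals the number of maximal chains whose descent set equals `S`. -/
theorem flagH_eq_card_descents {α : Type*} [PartialOrder α] [BoundedOrder α] [Finite α]
    (rk : α → ℕ) (n : ℕ) (hg : IsGraded rk) (htop : rk ⊤ = n)
    (τ : α → α → α → Bool) (hτ : IsTripleAssignment τ)
    (S : Finset ℕ) (hS : S ⊆ Finset.Icc 1 (n - 1)) :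
    (Nat.card {l : List α // SatChain (⊥ : α) ⊤ l ∧ descSet τ l = S} : ℤ) =
      flagH rk S := by
  rw [natCard_eq_sum_powerset_natCard_subset (SatChain.finite_setOf ⊥ ⊤) (descSet τ) S, flagH]
  refine Finset.sum_congr rfl fun T hT => ?_
  rw [flagF_eq_natCard_descSet_subset hτ hg (htop ▸ (Finset.mem_powerset.mp hT).trans hS)]
end

section
/- Let n ≥ 2 and let τ: W(T_n) → {a,b} be such that every interval of rank at most 3 in the butterfly poset T_n has a unique rising maximal chain. Then T_n contains a breakpoint, i.e., an element y with 0̂ < y < 1̂ such that the value τ(x, y, z) is the same for all x ⋖ y ⋖ z. -/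
open Finset

/-!
Under the hypothesis every rank-two interval `[x, z]` has a unique element `m(x, z)` with
`τ x m(x, z) z = 𝐚`, and `τ x y z = 𝐚` exactly when `y = m(x, z)`; so `y` is a breakpoint as soon as
`m(x, z)` is the same for all `x ⋖ y ⋖ z`. In a rank-three interval `[x, w]` the rising chains
`x ⋖ y ⋖ z ⋖ w` correspond to the fixed points of `y ↦ m(x, m(y, w))` on a two-element rank level.
There is exactly one, so this map is not a bijection: `z ↦ m(x, z)` or `y ↦ m(y, w)` is constant.
Consequently, if `m(x, w)` does not depend on `x` for `w` of rank `j + 2` and there is no breakpoint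
of rank `j + 1`, then `m(x, w)` does not depend on `x` for `w` of rank `j + 3`. This independence holds
trivially for `j = 0` (where `x = 0̂`), and for `j = n - 2` (where `w = 1̂`) it makes the elements of
rank `n - 1` breakpoints.
-/

section Chains

variable {α : Type*} {x y z w : α}

theorem satChain_triple_iff [PartialOrder α] : SatChain x z [x, y, z] ↔ x ⋖ y ∧ y ⋖ z := by
  change List.IsChain _ _ ∧ _ ↔ _
  simp [List.isChain_cons_cons]

theorem satChain_quad_iff [PartialOrder α] :
    SatChain x w [x, y, z, w] ↔ x ⋖ y ∧ y ⋖ z ∧ z ⋖ w := by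
  change List.IsChain _ _ ∧ _ ↔ _
  simp [List.isChain_cons_cons]

theorem risingOn_triple_iff {τ : α → α → α → Bool} :
    RisingOn τ [x, y, z] ↔ τ x y z = true := by
  refine ⟨fun h => h 0 (by simp), fun h i hi => ?_⟩
  obtain rfl : i = 0 := by simp at hi; omega
  exact h

theorem risingOn_quad_iff {τ : α → α → α → Bool} :
    RisingOn τ [x, y, z, w] ↔ τ x y z = true ∧ τ y z w = true := by
  refine ⟨fun h => ⟨h 0 (by simp), h 1 (by simp)⟩, fun ⟨h₀, h₁⟩ i hi => ?_⟩
  simp only [List.length_cons, List.length_nil] at hi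
  rcases i with _ | _ | i
  exacts [h₀, h₁, by omega]

theorem SatChain.rk_add_length [PartialOrder α] {l : List α} {rk : α → ℕ}
    (hrk : ∀ a b : α, a ⋖ b → rk b = rk a + 1) (h : SatChain x z l) : rk x + l.length = rk z + 1 := by
  obtain ⟨hc, hx, hz⟩ := h
  induction l generalizing x with
  | nil => simp at hx
  | cons a t ih =>
    obtain rfl : a = x := by simpa using hx
    cases t with
    | nil => simp_all
    | cons b t =>
      obtain ⟨hab, hc⟩ := List.isChain_cons_cons.1 hc
      have := ih hc rfl (by simpa using hz)
      have := hrk a b hab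
      simp only [List.length_cons] at *
      omega

end Chains

namespace Butt

variable {n : ℕ} {x y z w : Butt n}

@[simp] theorem rk_top : (⊤ : Butt n).rk = n := rfl

theorem eq_bot_of_rk_eq_zero (h : x.rk = 0) : x = ⊥ :=
  ext' h (x.hb (Or.inl h))

theorem eq_top_of_rk_eq (h : x.rk = n) : x = ⊤ :=
  ext' h (x.hb (Or.inr h))

theorem lt_iff_rk_lt : x < y ↔ x.rk < y.rk := by
  refine ⟨fun h => ?_, fun h => lt_of_le_of_ne (Or.inr h) (by rintro rfl; omega)⟩
  rcases h.le with rfl | h'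
  exacts [absurd rfl h.ne, h']

def ofRank (i : ℕ) (h : i ≤ n) : Butt n := ⟨i, false, h, fun _ => rfl⟩

theorem covBy_iff_rk : x ⋖ y ↔ y.rk = x.rk + 1 := by
  refine ⟨fun h => ?_, fun h => ⟨lt_iff_rk_lt.2 (by omega), fun c hxc hcy => ?_⟩⟩
  · have hxy := lt_iff_rk_lt.1 h.lt
    by_contra hne
    exact h.2 (c := ofRank (x.rk + 1) (by have := y.hle; omega))
      (lt_iff_rk_lt.2 (by simp [ofRank])) (lt_iff_rk_lt.2 (by simp [ofRank]; omega))
  · rw [lt_iff_rk_lt] at hxc hcy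
    omega

theorem eq_or_eq_of_rk_eq {a b c : Butt n} (hab : a.rk = b.rk) (hne : a ≠ b)
    (hc : c.rk = a.rk) : c = a ∨ c = b := by
  have hs : a.side ≠ b.side := fun h => hne (ext' hab h)
  by_cases hca : c.side = a.side
  · exact Or.inl (ext' hc hca)
  · exact Or.inr (ext' (hc.trans hab) (by revert hs hca; cases a.side <;> cases b.side <;> simp))

theorem apply_ne_apply_of_rk_eq {β : Type*} {f : Butt n → β} {a b c d : Butt n}
    (hab : a.rk = b.rk) (hf : f a ≠ f b) (hc : c.rk = a.rk) (hd : d.rk = a.rk) (hcd : c ≠ d) :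
    f c ≠ f d := by
  have hne : a ≠ b := fun h => hf (congrArg f h)
  rcases eq_or_eq_of_rk_eq hab hne hc with rfl | rfl <;>
    rcases eq_or_eq_of_rk_eq hab hne hd with rfl | rfl
  exacts [absurd rfl hcd, hf, hf.symm, absurd rfl hcd]

theorem eq_triple_of_satChain {l : List (Butt n)} (hxz : z.rk = x.rk + 2) (h : SatChain x z l) :
    ∃ y, l = [x, y, z] := by
  have hlen := h.rk_add_length fun _ _ => covBy_iff_rk.1
  obtain ⟨a, b, c, rfl⟩ := List.length_eq_three.1 (by omega : l.length = 3)
  obtain ⟨-, ha, hc⟩ := h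
  simp only [List.head?_cons, List.getLast?_cons_cons, List.getLast?_singleton,
    Option.some.injEq] at ha hc
  exact ⟨b, by rw [ha, hc]⟩

theorem eq_quad_of_satChain {l : List (Butt n)} (hxw : w.rk = x.rk + 3) (h : SatChain x w l) :
    ∃ y z, l = [x, y, z, w] := by
  have hlen := h.rk_add_length fun _ _ => covBy_iff_rk.1
  obtain ⟨a, t, rfl⟩ := List.exists_cons_of_length_eq_add_one (by omega : l.length = 3 + 1)
  obtain ⟨b, c, d, rfl⟩ := List.length_eq_three.1 (by simp at hlen; omega : t.length = 3)
  obtain ⟨-, ha, hd⟩ := h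
  simp only [List.head?_cons, List.getLast?_cons_cons, List.getLast?_singleton,
    Option.some.injEq] at ha hd
  exact ⟨b, c, by rw [ha, hd]⟩

def UniqueRisingUpToRankThree (τ : Butt n → Butt n → Butt n → Bool) : Prop :=
  ∀ x y : Butt n, x < y → y.rk - x.rk ≤ 3 →
    ∃! l : List (Butt n), SatChain x y l ∧ RisingOn τ l

variable {τ : Butt n → Butt n → Butt n → Bool}

theorem existsUnique_risingMid (hτ : UniqueRisingUpToRankThree τ) (hxz : z.rk = x.rk + 2) :
    ∃! y, x ⋖ y ∧ y ⋖ z ∧ τ x y z = true := by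
  obtain ⟨l, ⟨hl, hr⟩, huniq⟩ := hτ x z (lt_iff_rk_lt.2 (by omega)) (by omega)
  obtain ⟨y, rfl⟩ := eq_triple_of_satChain hxz hl
  obtain ⟨hxy, hyz⟩ := satChain_triple_iff.1 hl
  refine ⟨y, ⟨hxy, hyz, risingOn_triple_iff.1 hr⟩, fun y' ⟨hxy', hy'z, hτ'⟩ => ?_⟩
  simpa using huniq [x, y', z] ⟨satChain_triple_iff.2 ⟨hxy', hy'z⟩, risingOn_triple_iff.2 hτ'⟩

theorem existsUnique_risingPair (hτ : UniqueRisingUpToRankThree τ) (hxw : w.rk = x.rk + 3) :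
    ∃! p : Butt n × Butt n,
      x ⋖ p.1 ∧ p.1 ⋖ p.2 ∧ p.2 ⋖ w ∧ τ x p.1 p.2 = true ∧ τ p.1 p.2 w = true := by
  obtain ⟨l, ⟨hl, hr⟩, huniq⟩ := hτ x w (lt_iff_rk_lt.2 (by omega)) (by omega)
  obtain ⟨y, z, rfl⟩ := eq_quad_of_satChain hxw hl
  obtain ⟨hxy, hyz, hzw⟩ := satChain_quad_iff.1 hl
  refine ⟨(y, z), ⟨hxy, hyz, hzw, risingOn_quad_iff.1 hr⟩, fun ⟨y', z'⟩ h' => ?_⟩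
  obtain ⟨hxy', hy'z', hz'w, hτ'⟩ := h'
  simpa using huniq [x, y', z', w]
    ⟨satChain_quad_iff.2 ⟨hxy', hy'z', hz'w⟩, risingOn_quad_iff.2 hτ'⟩

open Classical in
/-- The element `m(x, z)` of the header; meaningful only when `z.rk = x.rk + 2`. -/
noncomputable def risingMid (τ : Butt n → Butt n → Butt n → Bool) (x z : Butt n) : Butt n :=
  if h : ∃ y, x ⋖ y ∧ y ⋖ z ∧ τ x y z = true then h.choose else x

theorem risingMid_spec (hτ : UniqueRisingUpToRankThree τ) (hxz : z.rk = x.rk + 2) :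
    x ⋖ risingMid τ x z ∧ risingMid τ x z ⋖ z ∧ τ x (risingMid τ x z) z = true := by
  have h := (existsUnique_risingMid hτ hxz).exists
  rw [risingMid, dif_pos h]
  exact h.choose_spec

theorem rk_risingMid (hτ : UniqueRisingUpToRankThree τ) (hxz : z.rk = x.rk + 2) :
    (risingMid τ x z).rk = x.rk + 1 :=
  covBy_iff_rk.1 (risingMid_spec hτ hxz).1

theorem tau_eq_true_iff (hτ : UniqueRisingUpToRankThree τ) (hxy : x ⋖ y) (hyz : y ⋖ z) :
    τ x y z = true ↔ y = risingMid τ x z := by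
  have hxz : z.rk = x.rk + 2 := by rw [covBy_iff_rk] at hxy hyz; omega
  refine ⟨fun h => (existsUnique_risingMid hτ hxz).unique ⟨hxy, hyz, h⟩ (risingMid_spec hτ hxz),
    fun h => h ▸ (risingMid_spec hτ hxz).2.2⟩

theorem isBreakpoint_of_risingMid_eq (hτ : UniqueRisingUpToRankThree τ)
    (h : ∀ x x' z z', x ⋖ y → y ⋖ z → x' ⋖ y → y ⋖ z' → risingMid τ x z = risingMid τ x' z') :
    IsBreakpoint τ y := by
  by_cases hy : ∃ x z, x ⋖ y ∧ y ⋖ z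
  · obtain ⟨x₀, z₀, hx₀, hz₀⟩ := hy
    refine ⟨τ x₀ y z₀, fun x z hx hz => Bool.eq_iff_iff.2 ?_⟩
    rw [tau_eq_true_iff hτ hx hz, tau_eq_true_iff hτ hx₀ hz₀, h x x₀ z z₀ hx hz hx₀ hz₀]
  · exact ⟨true, fun x z hx hz => absurd ⟨x, z, hx, hz⟩ hy⟩

/-- Otherwise `z ↦ m(x, z)` and `y ↦ m(y, w)` are both bijections between two-element levels, and
the unique rising chain `x ⋖ a ⋖ b ⋖ w` would have a twin `x ⋖ a' ⋖ b' ⋖ w` with `a' ≠ a`. -/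
theorem risingMid_eq_of_rank_three (hτ : UniqueRisingUpToRankThree τ) (hxw : w.rk = x.rk + 3)
    {z z' : Butt n} (hz : z.rk = x.rk + 2) (hz' : z'.rk = x.rk + 2)
    (hzz' : risingMid τ x z ≠ risingMid τ x z') {y y' : Butt n} (hy : y.rk = x.rk + 1)
    (hy' : y'.rk = x.rk + 1) : risingMid τ y w = risingMid τ y' w := by
  by_contra hyy'
  obtain ⟨⟨a, b⟩, ⟨hxa, hab, hbw, hτxab, hτabw⟩, huniq⟩ := existsUnique_risingPair hτ hxw
  dsimp only at hxa hab hbw hτxab hτabw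
  have hsel_a : a = risingMid τ x b := (tau_eq_true_iff hτ hxa hab).1 hτxab
  have hsel_b : b = risingMid τ a w := (tau_eq_true_iff hτ hab hbw).1 hτabw
  rw [covBy_iff_rk] at hxa hab hbw
  obtain ⟨a', ha', ha'a⟩ : ∃ a', a'.rk = x.rk + 1 ∧ a' ≠ a := by
    by_cases hya : y = a
    · exact ⟨y', hy', fun h => hyy' (by rw [hya, h])⟩
    · exact ⟨y, hy, hya⟩
  set b' := risingMid τ a' w
  have hb' : b'.rk = x.rk + 2 := by rw [rk_risingMid hτ (by omega)]; omega
  have hb'b : b' ≠ b := by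
    rw [hsel_b]
    exact apply_ne_apply_of_rk_eq (f := (risingMid τ · w)) (hy.trans hy'.symm) hyy'
      (by omega) (by omega) ha'a
  have hxb' : risingMid τ x b' = a' := by
    refine (eq_or_eq_of_rk_eq (hxa.trans ha'.symm) ha'a.symm ?_).resolve_left ?_
    · rw [rk_risingMid hτ (by omega)]; omega
    · rw [hsel_a]
      exact apply_ne_apply_of_rk_eq (hz.trans hz'.symm) hzz' (by omega) (by omega) hb'b
  have hxa' : x ⋖ a' := covBy_iff_rk.2 ha'
  have ha'b' : a' ⋖ b' := covBy_iff_rk.2 (by omega)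
  have hb'w : b' ⋖ w := covBy_iff_rk.2 (by omega)
  have := huniq (a', b') ⟨hxa', ha'b', hb'w, (tau_eq_true_iff hτ hxa' ha'b').2 hxb'.symm,
    (tau_eq_true_iff hτ ha'b' hb'w).2 rfl⟩
  exact ha'a (Prod.ext_iff.1 this).1

def MidIndepOfBottom (τ : Butt n → Butt n → Butt n → Bool) (j : ℕ) : Prop :=
  ∀ x x' w : Butt n, x.rk = j → x'.rk = j → w.rk = j + 2 → risingMid τ x w = risingMid τ x' w

theorem midIndepOfBottom_zero : MidIndepOfBottom τ 0 := fun x x' _ hx hx' _ => by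
  rw [eq_bot_of_rk_eq_zero hx, eq_bot_of_rk_eq_zero hx']

theorem MidIndepOfBottom.succ (hτ : UniqueRisingUpToRankThree τ) {j : ℕ}
    (hj : MidIndepOfBottom τ j) (hbp : ∀ y : Butt n, y.rk = j + 1 → ¬ IsBreakpoint τ y) :
    MidIndepOfBottom τ (j + 1) := by
  intro x x' w hx hx' hw
  have hwn := w.hle
  set u := ofRank j (n := n) (by omega)
  obtain ⟨z, z', hz, hz', hne⟩ : ∃ z z' : Butt n,
      z.rk = j + 2 ∧ z'.rk = j + 2 ∧ risingMid τ u z ≠ risingMid τ u z' := by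
    by_contra! hconst
    refine hbp (ofRank (j + 1) (by omega)) rfl (isBreakpoint_of_risingMid_eq hτ ?_)
    intro p p' q q' hp hq hp' hq'
    simp only [covBy_iff_rk, ofRank] at hp hq hp' hq'
    rw [hj p u q (by omega) rfl (by omega), hconst q q' (by omega) (by omega),
      hj u p' q' rfl (by omega) (by omega)]
  exact risingMid_eq_of_rank_three hτ (x := u) (by simp [u, ofRank]; omega) hz hz' hne hx hx'

theorem MidIndepOfBottom.isBreakpoint (hτ : UniqueRisingUpToRankThree τ) {j : ℕ}
    (hj : MidIndepOfBottom τ j) (hjn : j + 2 = n) (hy : y.rk = j + 1) : IsBreakpoint τ y := by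
  refine isBreakpoint_of_risingMid_eq hτ fun x x' z z' hx hz hx' hz' => ?_
  rw [covBy_iff_rk] at hx hz hx' hz'
  rw [eq_top_of_rk_eq (x := z) (by omega), eq_top_of_rk_eq (x := z') (by omega)]
  exact hj x x' ⊤ (by omega) (by omega) (by simp; omega)

end Butt

/-- If every interval of rank at most 3 of the butterfly poset `T_n`
(`n ≥ 2`) has a unique rising maximal chain for `τ`, then `T_n` contains a breakpoint. -/
theorem butterfly_exists_breakpoint (n : ℕ) (hn : 2 ≤ n)
    (τ : Butt n → Butt n → Butt n → Bool)
    (h3 : ∀ x y : Butt n, x < y → y.rk - x.rk ≤ 3 →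
      ∃! l : List (Butt n), SatChain x y l ∧ RisingOn τ l) :
    ∃ y : Butt n, ⊥ < y ∧ y < ⊤ ∧ IsBreakpoint τ y := by
  by_contra! hnone
  have hnone' (y : Butt n) (h0 : 0 < y.rk) (hlt : y.rk < n) : ¬ IsBreakpoint τ y :=
    hnone y (Butt.lt_iff_rk_lt.2 h0) (Butt.lt_iff_rk_lt.2 hlt)
  have hindep (j : ℕ) (hj : j + 2 ≤ n) : Butt.MidIndepOfBottom τ j := by
    induction j with
    | zero => exact Butt.midIndepOfBottom_zero
    | succ j ih => exact (ih (by omega)).succ h3 fun y hy => hnone' y (by omega) (by omega)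
  obtain ⟨y, hy⟩ : ∃ y : Butt n, y.rk = n - 1 := ⟨Butt.ofRank (n - 1) (by omega), rfl⟩
  exact hnone' y (by omega) (by omega)
    ((hindep (n - 2) (by omega)).isBreakpoint h3 (by omega) (by omega))
end

section
/- The poset P_n has flag h-vector h_S = 2 − (−1)^{|S|} for all S ⊆ {1,...,n-1}; in particular h_S = 1 when |S| is even and h_S = 3 when |S| is odd, so all entries are positive. -/
open Finset

/-!
Interior elements of `P_n` are comparable exactly when they lie in the same copy and have
different ranks. Hence a chain with nonempty rank set `T` is a choice of copy together with a
choice of side at each rank of `T`, so `f_T = 2 · 2^{|T|}`, while `f_∅ = 1`. Inclusion–exclusion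
turns `f_T = a x^{|T|}` (for `T ≠ ∅`) into `h_S = a (x - 1)^{|S|} + (1 - a) (-1)^{|S|}`.
-/

section FlagChains
variable {α : Type*} [PartialOrder α] [BoundedOrder α]

def IsFlagChain (rk : α → ℕ) (S : Finset ℕ) (c : Finset α) : Prop :=
  IsChain (· ≤ ·) (↑c : Set α) ∧ c.image rk = S ∧ c.card = S.card ∧ ∀ x ∈ c, ⊥ < x ∧ x < ⊤

theorem flagF_eq_card_isFlagChain (rk : α → ℕ) (S : Finset ℕ) :
    flagF rk S = Nat.card {c : Finset α // IsFlagChain rk S c} := rfl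

theorem IsFlagChain.injOn_rk {rk : α → ℕ} {S : Finset ℕ} {c : Finset α}
    (hc : IsFlagChain rk S c) : Set.InjOn rk c := by
  rw [← Finset.card_image_iff, hc.2.1, hc.2.2.1]

theorem IsFlagChain.rk_mem {rk : α → ℕ} {S : Finset ℕ} {c : Finset α}
    (hc : IsFlagChain rk S c) {x : α} (hx : x ∈ c) : rk x ∈ S :=
  hc.2.1 ▸ Finset.mem_image_of_mem rk hx

theorem IsFlagChain.exists_rk_eq {rk : α → ℕ} {S : Finset ℕ} {c : Finset α}
    (hc : IsFlagChain rk S c) {i : ℕ} (hi : i ∈ S) : ∃ x ∈ c, rk x = i :=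
  Finset.mem_image.mp (hc.2.1 ▸ hi)

theorem flagF_empty (rk : α → ℕ) : flagF rk ∅ = 1 := by
  rw [flagF_eq_card_isFlagChain, Nat.card_eq_one_iff_exists]
  refine ⟨⟨∅, by simp [IsFlagChain]⟩, fun ⟨c, hc⟩ => Subtype.ext ?_⟩
  simpa using hc.2.2.1

theorem flagH_eq_of_flagF_eq_mul_pow (rk : α → ℕ) (S : Finset ℕ) (a x : ℕ)
    (hf : ∀ T ⊆ S, T.Nonempty → flagF rk T = a * x ^ T.card) :
    flagH rk S = a * ((x : ℤ) - 1) ^ S.card + (1 - a) * (-1) ^ S.card := by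
  have hT : ∀ T ∈ S.powerset, (-1 : ℤ) ^ (S.card - T.card) * (flagF rk T : ℤ) =
      a * ((x : ℤ) ^ T.card * (-1) ^ (S.card - T.card)) +
        if T = ∅ then (1 - (a : ℤ)) * (-1) ^ S.card else 0 := by
    intro T hTS
    rcases T.eq_empty_or_nonempty with rfl | hne
    · simp only [flagF_empty, Finset.card_empty, Nat.sub_zero, if_true]
      ring
    · rw [hf T (Finset.mem_powerset.mp hTS) hne, if_neg hne.ne_empty]
      push_cast
      ring
  rw [flagH, Finset.sum_congr rfl hT, Finset.sum_add_distrib, ← Finset.mul_sum,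
    Finset.sum_pow_mul_eq_add_pow, Finset.sum_ite_eq' _ _ _,
    if_pos (Finset.empty_mem_powerset S)]
  ring

end FlagChains

namespace Glue
variable {n : ℕ}

theorem lt_iff {x y : Glue n} :
    x < y ↔ x.rk < y.rk ∧ (x.copy = y.copy ∨ x.rk = 0 ∨ y.rk = n) := by
  refine ⟨fun h => ?_, fun h => lt_of_le_of_ne (Or.inr h) fun e => by subst e; omega⟩
  rcases (h.le : x = y ∨ _) with rfl | h'
  · exact absurd rfl h.ne
  · exact h'

theorem bot_lt_iff {x : Glue n} : ⊥ < x ↔ 0 < x.rk := by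
  rw [lt_iff]
  exact ⟨And.left, fun h => ⟨h, Or.inr (Or.inl rfl)⟩⟩

theorem lt_top_iff {x : Glue n} : x < ⊤ ↔ x.rk < n := by
  rw [lt_iff]
  exact ⟨And.left, fun h => ⟨h, Or.inr (Or.inr rfl)⟩⟩

theorem copy_eq_of_le {x y : Glue n} (hxy : x ≤ y) (hx : 0 < x.rk) (hy : y.rk < n) :
    x.copy = y.copy := by
  rcases hxy with rfl | ⟨-, h | h | h⟩ <;> first | rfl | exact h | omega

instance : DecidableEq (Glue n) := fun x y =>
  decidable_of_iff (x.rk = y.rk ∧ x.side = y.side ∧ x.copy = y.copy)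
    ⟨fun ⟨h1, h2, h3⟩ => ext' h1 h2 h3, fun h => h ▸ ⟨rfl, rfl, rfl⟩⟩

def interior (cp sd : Bool) (i : ℕ) (hi : i ∈ Finset.Icc 1 (n - 1)) : Glue n :=
  ⟨i, sd, cp, by grind, fun h => absurd h (by grind)⟩

def flagChain (T : Finset ℕ) (hT : T ⊆ Finset.Icc 1 (n - 1)) (cp : Bool) (σ : T → Bool) :
    Finset (Glue n) :=
  T.attach.image fun i => interior cp (σ i) i (hT i.2)

theorem mem_flagChain {T : Finset ℕ} {hT : T ⊆ Finset.Icc 1 (n - 1)} {cp : Bool}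
    {σ : T → Bool} {x : Glue n} :
    x ∈ flagChain T hT cp σ ↔ ∃ h : x.rk ∈ T, x.copy = cp ∧ x.side = σ ⟨x.rk, h⟩ := by
  simp only [flagChain, Finset.mem_image, Finset.mem_attach, true_and]
  constructor
  · rintro ⟨i, rfl⟩
    exact ⟨i.2, rfl, rfl⟩
  · rintro ⟨h, hc, hs⟩
    exact ⟨⟨x.rk, h⟩, ext' rfl hs.symm hc.symm⟩

theorem isFlagChain_flagChain (T : Finset ℕ) (hT : T ⊆ Finset.Icc 1 (n - 1)) (cp : Bool)
    (σ : T → Bool) : IsFlagChain Glue.rk T (flagChain T hT cp σ) := by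
  have hinj : Function.Injective fun i : T => interior (n := n) cp (σ i) i (hT i.2) :=
    fun i j h => Subtype.ext (congrArg Glue.rk h)
  refine ⟨fun x hx y hy hxy => ?_, ?_, ?_, fun x hx => ?_⟩
  · obtain ⟨_, hxc, hxs⟩ := mem_flagChain.mp hx
    obtain ⟨_, hyc, hys⟩ := mem_flagChain.mp hy
    have hrk : x.rk ≠ y.rk := fun h =>
      hxy (ext' h (by rw [hxs, hys]; exact congrArg σ (Subtype.ext h)) (hxc.trans hyc.symm))
    rcases Nat.lt_or_gt_of_ne hrk with h | h
    · exact Or.inl (Or.inr ⟨h, Or.inl (hxc.trans hyc.symm)⟩)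
    · exact Or.inr (Or.inr ⟨h, Or.inl (hyc.trans hxc.symm)⟩)
  · rw [flagChain, Finset.image_image]
    exact Finset.attach_image_val
  · rw [flagChain, Finset.card_image_of_injective _ hinj, Finset.card_attach]
  · obtain ⟨h, -⟩ := mem_flagChain.mp hx
    have := Finset.mem_Icc.mp (hT h)
    exact ⟨bot_lt_iff.mpr (by omega), lt_top_iff.mpr (by omega)⟩

theorem copy_eq_of_isFlagChain {S : Finset ℕ} {c : Finset (Glue n)}
    (hc : IsFlagChain Glue.rk S c) {x y : Glue n} (hx : x ∈ c) (hy : y ∈ c) : x.copy = y.copy := by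
  have interior_rk {z : Glue n} (hz : z ∈ c) : 0 < z.rk ∧ z.rk < n :=
    ⟨bot_lt_iff.mp (hc.2.2.2 z hz).1, lt_top_iff.mp (hc.2.2.2 z hz).2⟩
  rcases eq_or_ne x y with rfl | hxy
  · rfl
  rcases hc.1 hx hy hxy with h | h
  · exact copy_eq_of_le h (interior_rk hx).1 (interior_rk hy).2
  · exact (copy_eq_of_le h (interior_rk hy).1 (interior_rk hx).2).symm

theorem exists_flagChain_eq_of_isFlagChain {T : Finset ℕ} (hT : T ⊆ Finset.Icc 1 (n - 1))
    {c : Finset (Glue n)} (hc : IsFlagChain Glue.rk T c) (hne : T.Nonempty) :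
    ∃ cp σ, flagChain T hT cp σ = c := by
  obtain ⟨e, he⟩ : c.Nonempty := by rw [← Finset.card_pos, hc.2.2.1]; exact hne.card_pos
  choose w hw hwrk using fun i : T => hc.exists_rk_eq i.2
  refine ⟨e.copy, fun i => (w i).side, Finset.ext fun x => ⟨fun hx => ?_, fun hx => ?_⟩⟩
  · obtain ⟨h, hxc, hxs⟩ := mem_flagChain.mp hx
    have hxw : x = w ⟨x.rk, h⟩ :=
      ext' (hwrk ⟨x.rk, h⟩).symm hxs (hxc.trans (copy_eq_of_isFlagChain hc he (hw _)))
    exact hxw ▸ hw _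
  · have h := hc.rk_mem hx
    have hwx : w ⟨x.rk, h⟩ = x := hc.injOn_rk (hw _) hx (hwrk _)
    exact mem_flagChain.mpr ⟨h, copy_eq_of_isFlagChain hc hx he, by rw [hwx]⟩

theorem flagChain_injective {T : Finset ℕ} (hT : T ⊆ Finset.Icc 1 (n - 1)) (hne : T.Nonempty) :
    Function.Injective fun p : Bool × (T → Bool) => flagChain T hT p.1 p.2 := by
  rintro ⟨cp, σ⟩ ⟨cp', σ'⟩ (h : flagChain T hT cp σ = flagChain T hT cp' σ')
  have hmem (i : T) : interior cp (σ i) i (hT i.2) ∈ flagChain T hT cp' σ' :=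
    h ▸ Finset.mem_image_of_mem _ (Finset.mem_attach T i)
  obtain ⟨i0, hi0⟩ := hne
  exact Prod.ext (mem_flagChain.mp (hmem ⟨i0, hi0⟩)).2.1
    (funext fun i => (mem_flagChain.mp (hmem i)).2.2)

theorem flagF_eq_of_nonempty (T : Finset ℕ) (hT : T ⊆ Finset.Icc 1 (n - 1)) (hne : T.Nonempty) :
    flagF (Glue.rk (n := n)) T = 2 * 2 ^ T.card := by
  have hbij : Function.Bijective fun p : Bool × (T → Bool) =>
      (⟨flagChain T hT p.1 p.2, isFlagChain_flagChain T hT p.1 p.2⟩ :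
        {c : Finset (Glue n) // IsFlagChain Glue.rk T c}) :=
    ⟨fun p q h => flagChain_injective hT hne (congrArg Subtype.val h), fun ⟨c, hc⟩ =>
      (exists_flagChain_eq_of_isFlagChain hT hc hne).elim fun cp ⟨σ, h⟩ =>
        ⟨(cp, σ), Subtype.ext h⟩⟩
  rw [flagF_eq_card_isFlagChain, ← Nat.card_eq_of_bijective _ hbij]
  simp [Nat.card_eq_fintype_card]

end Glue

/-- The poset `P_n` has flag `h`-vector `h_S = 2 − (−1)^{|S|}` for all
`S ⊆ {1,…,n-1}`; in particular all entries are positive (`1` for even `|S|`, `3` for odd). -/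
theorem glue_flagH (n : ℕ) (S : Finset ℕ) (hS : S ⊆ Finset.Icc 1 (n - 1)) :
    flagH (Glue.rk (n := n)) S = 2 - (-1) ^ S.card := by
  rw [flagH_eq_of_flagF_eq_mul_pow _ S 2 2 fun T hT hne =>
    Glue.flagF_eq_of_nonempty T (hT.trans hS) hne]
  norm_num
  ring
end

section
/- For odd n, the poset P_n obtained by gluing two copies of the butterfly poset T_n along 0̂ and 1̂ is an Eulerian poset. -/
open Finset

section GlueAux

instance glueDecEq {n : ℕ} : DecidableEq (Glue n) := fun x y =>
  decidable_of_iff (x.rk = y.rk ∧ x.side = y.side ∧ x.copy = y.copy)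
    ⟨fun ⟨h1, h2, h3⟩ => Glue.ext' h1 h2 h3, fun h => by subst h; exact ⟨rfl, rfl, rfl⟩⟩

/-- make a middle element of `Glue n`, with a default if out of range -/
def gmk (n r : ℕ) (s c : Bool) (d : Glue n) : Glue n :=
  if h : 1 ≤ r ∧ r < n then ⟨r, s, c, Nat.le_of_lt h.2, fun hh => absurd hh (by omega)⟩ else d

lemma gmk_rk {n r : ℕ} {s c : Bool} {d : Glue n} (h : 1 ≤ r ∧ r < n) :
    (gmk n r s c d).rk = r := by simp [gmk, h]

lemma gmk_side {n r : ℕ} {s c : Bool} {d : Glue n} (h : 1 ≤ r ∧ r < n) :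
    (gmk n r s c d).side = s := by simp [gmk, h]

lemma gmk_copy {n r : ℕ} {s c : Bool} {d : Glue n} (h : 1 ≤ r ∧ r < n) :
    (gmk n r s c d).copy = c := by simp [gmk, h]

/-- the "diagonal" element of rank `r` with both labels `false` -/
def diag (n r : ℕ) : Glue n :=
  ⟨min r n, false, false, Nat.min_le_right r n, fun _ => ⟨rfl, rfl⟩⟩

lemma diag_rk {n r : ℕ} (h : r ≤ n) : (diag n r).rk = r := Nat.min_eq_left h

lemma diag_side {n r : ℕ} : (diag n r).side = false := rfl

lemma diag_copy {n r : ℕ} : (diag n r).copy = false := rfl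

lemma Glue.le_iff {n : ℕ} {x y : Glue n} :
    x ≤ y ↔ x = y ∨ (x.rk < y.rk ∧ (x.copy = y.copy ∨ x.rk = 0 ∨ y.rk = n)) := Iff.rfl

lemma Glue.lt_iff_s13 {n : ℕ} {x y : Glue n} :
    x < y ↔ x.rk < y.rk ∧ (x.copy = y.copy ∨ x.rk = 0 ∨ y.rk = n) := by
  rw [lt_iff_le_and_ne, Glue.le_iff]
  constructor
  · rintro ⟨rfl | h, hne⟩
    · exact absurd rfl hne
    · exact h
  · intro h
    exact ⟨Or.inr h, fun hh => by subst hh; omega⟩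

/-- the involution used for proper intervals -/
def pflip {n : ℕ} (x y : Glue n) (c : Bool) (z : Glue n) : Glue n :=
  if z = x then (if y.rk = x.rk + 1 then y else gmk n (x.rk + 1) false c x)
  else if z = y then (if y.rk = x.rk + 1 then x else gmk n (y.rk - 1) true c x)
  else if z.side then (if z.rk + 1 = y.rk then y else gmk n (z.rk + 1) false c x)
  else (if z.rk = x.rk + 1 then x else gmk n (z.rk - 1) true c x)

/-- the involution used for the full interval -/
def oflip (n : ℕ) (z : Glue n) : Glue n :=
  if z.side = false ∧ z.copy = false then
    (if Odd z.rk then diag n (z.rk - 1) else diag n (z.rk + 1))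
  else (if Odd z.rk then gmk n (z.rk + 1) z.side z.copy z else gmk n (z.rk - 1) z.side z.copy z)

lemma glue_proper (n : ℕ) (x y : Glue n) (hxy : x < y) (hne : x.rk ≠ 0 ∨ y.rk ≠ n) :
    Nat.card {z : Glue n // z ∈ Set.Icc x y ∧ Even (z.rk - x.rk)} =
    Nat.card {z : Glue n // z ∈ Set.Icc x y ∧ ¬ Even (z.rk - x.rk)} := by
  obtain ⟨hab, hcc⟩ := Glue.lt_iff_s13.1 hxy
  have hbn : y.rk ≤ n := y.hle
  set c : Bool := if x.rk = 0 then y.copy else x.copy with hc_def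
  -- membership characterization
  have hmem : ∀ z : Glue n, z ∈ Set.Icc x y ↔
      (z = x ∨ z = y ∨ (x.rk < z.rk ∧ z.rk < y.rk ∧ z.copy = c)) := by
    intro z
    rw [Set.mem_Icc]
    constructor
    · rintro ⟨h1, h2⟩
      rcases Glue.le_iff.1 h1 with h | ⟨hr1, hc1⟩
      · exact Or.inl h.symm
      rcases Glue.le_iff.1 h2 with h | ⟨hr2, hc2⟩
      · exact Or.inr (Or.inl h)
      refine Or.inr (Or.inr ⟨hr1, hr2, ?_⟩)
      by_cases h0 : x.rk = 0
      · have hbn' : y.rk ≠ n := by tauto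
        rcases hc2 with h | h | h
        · rw [hc_def, if_pos h0]; exact h
        · omega
        · exact absurd h hbn'
      · rcases hc1 with h | h | h
        · rw [hc_def, if_neg h0]; exact h.symm
        · omega
        · omega
    · rintro (rfl | rfl | ⟨h1, h2, h3⟩)
      · exact ⟨le_refl _, le_of_lt hxy⟩
      · exact ⟨le_of_lt hxy, le_refl _⟩
      · constructor
        · refine Glue.le_iff.2 (Or.inr ⟨h1, ?_⟩)
          by_cases h0 : x.rk = 0
          · exact Or.inr (Or.inl h0)
          · left; rw [h3, hc_def, if_neg h0]
        · refine Glue.le_iff.2 (Or.inr ⟨h2, ?_⟩)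
          by_cases hn' : y.rk = n
          · exact Or.inr (Or.inr hn')
          · left
            by_cases h0 : x.rk = 0
            · rw [h3, hc_def, if_pos h0]
            · rw [h3, hc_def, if_neg h0]
              rcases hcc with h | h | h
              · exact h
              · omega
              · omega
  set f : Glue n → Glue n := pflip x y c with hf_def
  have hxne : x ≠ y := ne_of_lt hxy
  have hyne : y ≠ x := Ne.symm hxne
  -- key properties of the involution
  have key : ∀ z : Glue n, z ∈ Set.Icc x y →
      f z ∈ Set.Icc x y ∧ f (f z) = z ∧ (Even ((f z).rk - x.rk) ↔ ¬ Even (z.rk - x.rk)) := by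
    intro z hz
    rcases (hmem z).1 hz with hzz | hzz | ⟨h1, h2, h3⟩
    · -- z = x
      rw [hzz]
      by_cases he : y.rk = x.rk + 1
      · have hfz : f x = y := by simp [hf_def, pflip, he]
        have hfy : f y = x := by simp [hf_def, pflip, hyne, he]
        refine ⟨?_, by rw [hfz, hfy], ?_⟩
        · rw [hfz]; exact (hmem y).2 (Or.inr (Or.inl rfl))
        · rw [hfz]
          simp only [Nat.even_iff]
          omega
      · have hg : 1 ≤ x.rk + 1 ∧ x.rk + 1 < n := by omega
        have hfz : f x = gmk n (x.rk + 1) false c x := by simp [hf_def, pflip, he]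
        set w := gmk n (x.rk + 1) false c x with hw
        have hwrk : w.rk = x.rk + 1 := gmk_rk hg
        have hwside : w.side = false := gmk_side hg
        have hwcopy : w.copy = c := gmk_copy hg
        have hwx : w ≠ x := fun h => by rw [h] at hwrk; omega
        have hwy : w ≠ y := fun h => by rw [h] at hwrk; omega
        have hfw : f w = x := by
          simp [hf_def, pflip, hwx, hwy, hwside, hwrk]
        refine ⟨?_, by rw [hfz, hfw], ?_⟩
        · rw [hfz]
          exact (hmem w).2 (Or.inr (Or.inr ⟨by omega, by omega, hwcopy⟩))
        · rw [hfz, hwrk]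
          simp only [Nat.even_iff]
          omega
    · -- z = y
      rw [hzz]
      by_cases he : y.rk = x.rk + 1
      · have hfz : f y = x := by simp [hf_def, pflip, hyne, he]
        have hfx : f x = y := by simp [hf_def, pflip, he]
        refine ⟨?_, by rw [hfz, hfx], ?_⟩
        · rw [hfz]; exact (hmem x).2 (Or.inl rfl)
        · rw [hfz]
          simp only [Nat.even_iff]
          omega
      · have hg : 1 ≤ y.rk - 1 ∧ y.rk - 1 < n := by omega
        have hfz : f y = gmk n (y.rk - 1) true c x := by
          simp [hf_def, pflip, hyne, he]
        set w := gmk n (y.rk - 1) true c x with hw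
        have hwrk : w.rk = y.rk - 1 := gmk_rk hg
        have hwside : w.side = true := gmk_side hg
        have hwcopy : w.copy = c := gmk_copy hg
        have hwx : w ≠ x := fun h => by rw [h] at hwrk; omega
        have hwy : w ≠ y := fun h => by rw [h] at hwrk; omega
        have hfw : f w = y := by
          have hq : w.rk + 1 = y.rk := by omega
          simp [hf_def, pflip, hwx, hwy, hwside, hq]
        refine ⟨?_, by rw [hfz, hfw], ?_⟩
        · rw [hfz]
          exact (hmem w).2 (Or.inr (Or.inr ⟨by omega, by omega, hwcopy⟩))
        · rw [hfz, hwrk]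
          simp only [Nat.even_iff]
          omega
    · -- middle element
      have hzx : z ≠ x := fun h => by rw [h] at h1; omega
      have hzy : z ≠ y := fun h => by rw [h] at h2; omega
      by_cases hs : z.side
      · by_cases he : z.rk + 1 = y.rk
        · have hfz : f z = y := by simp [hf_def, pflip, hzx, hzy, hs, he]
          have hfy : f y = z := by
            have hne' : ¬ y.rk = x.rk + 1 := by omega
            have hg : 1 ≤ y.rk - 1 ∧ y.rk - 1 < n := by omega
            have h5 : f y = gmk n (y.rk - 1) true c x := by
              simp [hf_def, pflip, hyne, hne']
            rw [h5]
            refine Glue.ext' ?_ ?_ ?_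
            · rw [gmk_rk hg]; omega
            · rw [gmk_side hg, hs]
            · rw [gmk_copy hg, h3]
          refine ⟨?_, by rw [hfz, hfy], ?_⟩
          · rw [hfz]; exact (hmem y).2 (Or.inr (Or.inl rfl))
          · rw [hfz]
            simp only [Nat.even_iff]
            omega
        · have hg : 1 ≤ z.rk + 1 ∧ z.rk + 1 < n := by omega
          have hfz : f z = gmk n (z.rk + 1) false c x := by
            simp [hf_def, pflip, hzx, hzy, hs, he]
          set w := gmk n (z.rk + 1) false c x with hw
          have hwrk : w.rk = z.rk + 1 := gmk_rk hg
          have hwside : w.side = false := gmk_side hg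
          have hwcopy : w.copy = c := gmk_copy hg
          have hwx : w ≠ x := fun h => by rw [h] at hwrk; omega
          have hwy : w ≠ y := fun h => by rw [h] at hwrk; omega
          have hfw : f w = z := by
            have hne' : ¬ w.rk = x.rk + 1 := by omega
            have hg2 : 1 ≤ w.rk - 1 ∧ w.rk - 1 < n := by omega
            have h5 : f w = gmk n (w.rk - 1) true c x := by
              simp [hf_def, pflip, hwx, hwy, hwside, hne']
            rw [h5]
            refine Glue.ext' ?_ ?_ ?_
            · rw [gmk_rk hg2]; omega
            · rw [gmk_side hg2, hs]
            · rw [gmk_copy hg2, h3]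
          refine ⟨?_, by rw [hfz, hfw], ?_⟩
          · rw [hfz]
            exact (hmem w).2 (Or.inr (Or.inr ⟨by omega, by omega, hwcopy⟩))
          · rw [hfz, hwrk]
            simp only [Nat.even_iff]
            omega
      · by_cases he : z.rk = x.rk + 1
        · have hfz : f z = x := by simp [hf_def, pflip, hzx, hzy, hs, he]
          have hfx : f x = z := by
            have hne' : ¬ y.rk = x.rk + 1 := by omega
            have hg : 1 ≤ x.rk + 1 ∧ x.rk + 1 < n := by omega
            have h5 : f x = gmk n (x.rk + 1) false c x := by
              simp [hf_def, pflip, hne']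
            rw [h5]
            refine Glue.ext' ?_ ?_ ?_
            · rw [gmk_rk hg]; omega
            · rw [gmk_side hg]
              simp only [Bool.not_eq_true] at hs
              rw [hs]
            · rw [gmk_copy hg, h3]
          refine ⟨?_, by rw [hfz, hfx], ?_⟩
          · rw [hfz]; exact (hmem x).2 (Or.inl rfl)
          · rw [hfz]
            simp only [Nat.even_iff]
            omega
        · have hg : 1 ≤ z.rk - 1 ∧ z.rk - 1 < n := by omega
          have hfz : f z = gmk n (z.rk - 1) true c x := by
            simp [hf_def, pflip, hzx, hzy, hs, he]
          set w := gmk n (z.rk - 1) true c x with hw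
          have hwrk : w.rk = z.rk - 1 := gmk_rk hg
          have hwside : w.side = true := gmk_side hg
          have hwcopy : w.copy = c := gmk_copy hg
          have hwx : w ≠ x := fun h => by rw [h] at hwrk; omega
          have hwy : w ≠ y := fun h => by rw [h] at hwrk; omega
          have hfw : f w = z := by
            have hne' : ¬ w.rk + 1 = y.rk := by omega
            have hg2 : 1 ≤ w.rk + 1 ∧ w.rk + 1 < n := by omega
            have h5 : f w = gmk n (w.rk + 1) false c x := by
              simp [hf_def, pflip, hwx, hwy, hwside, hne']
            rw [h5]
            refine Glue.ext' ?_ ?_ ?_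
            · rw [gmk_rk hg2]; omega
            · rw [gmk_side hg2]
              simp only [Bool.not_eq_true] at hs
              rw [hs]
            · rw [gmk_copy hg2, h3]
          refine ⟨?_, by rw [hfz, hfw], ?_⟩
          · rw [hfz]
            exact (hmem w).2 (Or.inr (Or.inr ⟨by omega, by omega, hwcopy⟩))
          · rw [hfz, hwrk]
            simp only [Nat.even_iff]
            omega
  exact Nat.card_congr ⟨fun z => ⟨f z.1, (key z.1 z.2.1).1,
      fun h => ((key z.1 z.2.1).2.2).1 h z.2.2⟩,
    fun z => ⟨f z.1, (key z.1 z.2.1).1, ((key z.1 z.2.1).2.2).2 z.2.2⟩,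
    fun z => Subtype.ext (key z.1 z.2.1).2.1,
    fun z => Subtype.ext (key z.1 z.2.1).2.1⟩

lemma glue_full (n : ℕ) (hn : Odd n) (x y : Glue n) (hx : x.rk = 0) (hy : y.rk = n)
    (hxy : x < y) :
    Nat.card {z : Glue n // z ∈ Set.Icc x y ∧ Even (z.rk - x.rk)} =
    Nat.card {z : Glue n // z ∈ Set.Icc x y ∧ ¬ Even (z.rk - x.rk)} := by
  have hxb : x = ⊥ := Glue.ext' hx (x.hb (Or.inl hx)).1 (x.hb (Or.inl hx)).2
  have hyt : y = ⊤ := Glue.ext' hy (y.hb (Or.inr hy)).1 (y.hb (Or.inr hy)).2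
  subst hxb hyt
  have hmem : ∀ z : Glue n, z ∈ Set.Icc (⊥ : Glue n) ⊤ := fun z => ⟨bot_le, le_top⟩
  obtain ⟨m, hm⟩ := hn
  have key : ∀ z : Glue n, oflip n (oflip n z) = z ∧
      (Even (oflip n z).rk ↔ ¬ Even z.rk) := by
    intro z
    have hzle : z.rk ≤ n := z.hle
    by_cases hd : z.side = false ∧ z.copy = false
    · have hzd : z = diag n z.rk := Glue.ext' (by rw [diag_rk hzle]) (by rw [diag_side, hd.1])
        (by rw [diag_copy, hd.2])
      by_cases ho : Odd z.rk
      · have h1 : z.rk - 1 ≤ n := by omega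
        have hfz : oflip n z = diag n (z.rk - 1) := by simp [oflip, hd, ho]
        have hrk : (oflip n z).rk = z.rk - 1 := by rw [hfz, diag_rk h1]
        constructor
        · rw [hfz]
          have hd2 : (diag n (z.rk - 1)).side = false ∧ (diag n (z.rk - 1)).copy = false :=
            ⟨diag_side, diag_copy⟩
          have ho2 : ¬ Odd (diag n (z.rk - 1)).rk := by
            rw [diag_rk h1]
            rcases ho with ⟨k, hk⟩
            simp [Nat.odd_iff] at *
            omega
          rw [oflip, if_pos hd2, if_neg ho2, diag_rk h1]
          have : z.rk - 1 + 1 = z.rk := by rcases ho with ⟨k, hk⟩; omega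
          rw [this, ← hzd]
        · rw [hrk]
          rcases ho with ⟨k, hk⟩
          simp [Nat.even_iff]
          omega
      · have h1 : z.rk + 1 ≤ n := by
          rcases Nat.even_or_odd z.rk with he | ho'
          · rcases he with ⟨k, hk⟩; omega
          · exact absurd ho' ho
        have hfz : oflip n z = diag n (z.rk + 1) := by simp [oflip, hd, ho]
        have hrk : (oflip n z).rk = z.rk + 1 := by rw [hfz, diag_rk h1]
        constructor
        · rw [hfz]
          have hd2 : (diag n (z.rk + 1)).side = false ∧ (diag n (z.rk + 1)).copy = false :=
            ⟨diag_side, diag_copy⟩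
          have ho2 : Odd (diag n (z.rk + 1)).rk := by
            rw [diag_rk h1]
            simp [Nat.odd_iff, Nat.even_iff] at *
            omega
          rw [oflip, if_pos hd2, if_pos ho2, diag_rk h1]
          simp only [Nat.add_sub_cancel]
          rw [← hzd]
        · rw [hrk]
          simp [Nat.even_iff, Nat.odd_iff] at *
          omega
    · have hzr : 1 ≤ z.rk ∧ z.rk ≤ n - 1 := by
        by_contra hcon
        have : z.rk = 0 ∨ z.rk = n := by omega
        exact hd (z.hb this)
      by_cases ho : Odd z.rk
      · have hg : 1 ≤ z.rk + 1 ∧ z.rk + 1 < n := by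
          simp [Nat.odd_iff] at ho
          omega
        have hfz : oflip n z = gmk n (z.rk + 1) z.side z.copy z := by simp [oflip, hd, ho]
        set w := gmk n (z.rk + 1) z.side z.copy z with hw
        have hwrk : w.rk = z.rk + 1 := gmk_rk hg
        have hwside : w.side = z.side := gmk_side hg
        have hwcopy : w.copy = z.copy := gmk_copy hg
        constructor
        · rw [hfz]
          have hd2 : ¬ (w.side = false ∧ w.copy = false) := by rw [hwside, hwcopy]; exact hd
          have ho2 : ¬ Odd w.rk := by
            rw [hwrk]
            simp [Nat.odd_iff] at *
            omega
          rw [oflip, if_neg hd2, if_neg ho2]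
          refine Glue.ext' ?_ ?_ ?_
          · rw [gmk_rk (by omega)]; omega
          · rw [gmk_side (by omega), hwside]
          · rw [gmk_copy (by omega), hwcopy]
        · rw [hfz, hwrk]
          simp [Nat.even_iff, Nat.odd_iff] at *
          omega
      · have hg : 1 ≤ z.rk - 1 ∧ z.rk - 1 < n := by
          simp [Nat.odd_iff] at ho
          omega
        have hfz : oflip n z = gmk n (z.rk - 1) z.side z.copy z := by simp [oflip, hd, ho]
        set w := gmk n (z.rk - 1) z.side z.copy z with hw
        have hwrk : w.rk = z.rk - 1 := gmk_rk hg
        have hwside : w.side = z.side := gmk_side hg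
        have hwcopy : w.copy = z.copy := gmk_copy hg
        have hz2 : 2 ≤ z.rk := by
          simp [Nat.odd_iff] at ho
          omega
        constructor
        · rw [hfz]
          have hd2 : ¬ (w.side = false ∧ w.copy = false) := by rw [hwside, hwcopy]; exact hd
          have ho2 : Odd w.rk := by
            rw [hwrk]
            simp [Nat.odd_iff] at *
            omega
          rw [oflip, if_neg hd2, if_pos ho2]
          refine Glue.ext' ?_ ?_ ?_
          · rw [gmk_rk (by omega)]; omega
          · rw [gmk_side (by omega), hwside]
          · rw [gmk_copy (by omega), hwcopy]
        · rw [hfz, hwrk]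
          simp [Nat.even_iff, Nat.odd_iff] at *
          omega
  have hconv : ∀ r : ℕ, Even (r - (⊥ : Glue n).rk) ↔ Even r := fun r => by
    have hbot0 : (⊥ : Glue n).rk = 0 := rfl
    rw [hbot0, Nat.sub_zero]
  refine Nat.card_congr ⟨fun z => ⟨oflip n z.1, hmem _, ?_⟩,
    fun z => ⟨oflip n z.1, hmem _, ?_⟩, fun z => Subtype.ext (key z.1).1,
    fun z => Subtype.ext (key z.1).1⟩
  · intro hc
    exact ((key z.1).2).1 ((hconv _).1 hc) ((hconv _).1 z.2.2)
  · exact (hconv _).2 (((key z.1).2).2 (fun h => z.2.2 ((hconv _).2 h)))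

end GlueAux

/-- For odd `n`, the poset `P_n` obtained by gluing two copies of the
butterfly poset `T_n` along `0̂` and `1̂` is an Eulerian poset. -/
theorem glue_eulerian_of_odd (n : ℕ) (hn : Odd n) :
    EulerianCount (Glue.rk (n := n)) := by
  intro x y hxy
  by_cases h : x.rk = 0 ∧ y.rk = n
  · exact glue_full n hn x y h.1 h.2 hxy
  · exact glue_proper n x y hxy (by tauto)
end

section
/- For n ≥ 4, every interval of P_n of length at most 3 other than [0̂,1̂] is an interval of one of the two butterfly subposets; in particular, if τ is a triple assignment of P_n, then its restriction to either butterfly subposet P or Q satisfies the hypothesis that every interval of rank at most 3 has a unique rising chain. -/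
open Finset

/-- One of the two butterfly subposets of `P_n` (including `0̂` and `1̂`). -/
def glueSide (n : ℕ) (b : Bool) : Set (Glue n) :=
  {x | x.copy = b ∨ x.rk = 0 ∨ x.rk = n}


/-!
In `P_n` an element of one copy lies below an element of the other copy only through `0̂` or
`1̂`, so an interval `[x, y]` with `x ≠ 0̂` or `y ≠ 1̂` stays inside the butterfly containing its
inner endpoint; for intervals of length at most `3 < n` this excludes only `[0̂, 1̂]`. If a
subposet contains a whole interval `[x, y]`, it has exactly the same maximal chains from `x` to
`y`, so the unique rising chain of `τ` on `[x, y]` is also the unique one in the subposet.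
-/

theorem risingOn_map_iff {α β : Type*} (f : β → α) (τ : α → α → α → Bool) (l : List β) :
    RisingOn (fun u v w => τ (f u) (f v) (f w)) l ↔ RisingOn τ (l.map f) := by
  simp only [RisingOn, List.length_map, List.get_eq_getElem, List.getElem_map]

section Restriction
variable {α : Type*} [PartialOrder α]

theorem SatChain.mem_Icc {x y z : α} {l : List α} (h : SatChain x y l) (hz : z ∈ l) :
    z ∈ Set.Icc x y := by
  obtain ⟨hc, hx, hy⟩ := h
  refine ⟨hc.induction (x ≤ ·) l (fun _ _ h hx => hx.trans h.le) (fun hl => ?_) z hz,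
    hc.backwards_induction (· ≤ y) l (fun _ _ h hy => h.le.trans hy) (fun hl => ?_) z hz⟩
  · rw [List.head?_eq_some_head hl] at hx
    exact (Option.some_injective _ hx).ge
  · rw [List.getLast?_eq_some_getLast hl] at hy
    exact (Option.some_injective _ hy).le

variable {S : Set α}

theorem covBy_coe_of_Icc_subset {u v : S} (hS : Set.Icc (u : α) v ⊆ S) (huv : u ⋖ v) :
    (u : α) ⋖ v :=
  ⟨huv.1, fun c huc hcv => huv.2 (c := ⟨c, hS ⟨huc.le, hcv.le⟩⟩) huc hcv⟩

theorem satChain_map_val_iff {x y : S} (hS : Set.Icc (x : α) y ⊆ S) {l : List S} :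
    SatChain x y l ↔ SatChain (x : α) y (l.map Subtype.val) := by
  have hends : l.head? = some x ∧ l.getLast? = some y ↔
      (l.map Subtype.val).head? = some (x : α) ∧ (l.map Subtype.val).getLast? = some (y : α) := by
    simp only [List.head?_map, List.getLast?_map, Option.map_eq_some_iff, Subtype.val_inj,
      exists_eq_right]
  refine ⟨fun ⟨hc, he⟩ => ⟨?_, hends.1 he⟩, fun ⟨hc, he⟩ => ⟨?_, hends.2 he⟩⟩
  · refine List.isChain_map _ |>.2 <| hc.imp_of_mem_imp fun u v hu hv huv => ?_
    refine covBy_coe_of_Icc_subset (Set.Subset.trans ?_ hS) huv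
    exact Set.Icc_subset_Icc (SatChain.mem_Icc ⟨hc, he⟩ hu).1 (SatChain.mem_Icc ⟨hc, he⟩ hv).2
  · exact (List.isChain_map _ |>.1 hc).imp fun u v => CovBy.of_image (OrderEmbedding.subtype S)

theorem IsTripleAssignment.existsUnique_restrict {τ : α → α → α → Bool}
    (hτ : IsTripleAssignment τ) {x y : S} (hxy : x < y) (hS : Set.Icc (x : α) y ⊆ S) :
    ∃! l : List S, SatChain x y l ∧ RisingOn (fun u v w : S => τ u v w) l := by
  obtain ⟨l, ⟨hsat, hrise⟩, huniq⟩ := hτ x y hxy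
  lift l to List S using fun z hz => hS (hsat.mem_Icc hz)
  refine ⟨l, ⟨(satChain_map_val_iff hS).2 hsat, (risingOn_map_iff _ τ l).2 hrise⟩, ?_⟩
  rintro l' ⟨hsat', hrise'⟩
  exact List.map_injective_iff.2 Subtype.val_injective
    (huniq _ ⟨(satChain_map_val_iff hS).1 hsat', (risingOn_map_iff _ τ l').1 hrise'⟩)

end Restriction

namespace Glue
variable {n : ℕ}

theorem le_iff_s16 {x y : Glue n} :
    x ≤ y ↔ x = y ∨ (x.rk < y.rk ∧ (x.copy = y.copy ∨ x.rk = 0 ∨ y.rk = n)) := Iff.rfl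

theorem eq_bot_of_rk_eq_zero {x : Glue n} (h : x.rk = 0) : x = ⊥ :=
  ext' h (x.hb (Or.inl h)).1 (x.hb (Or.inl h)).2

theorem eq_top_of_rk_eq {x : Glue n} (h : x.rk = n) : x = ⊤ :=
  ext' h (x.hb (Or.inr h)).1 (x.hb (Or.inr h)).2

theorem Icc_subset_glueSide {b : Bool} {x y : Glue n} (hx : x ∈ glueSide n b)
    (hy : y ∈ glueSide n b) (hxy : x.rk ≠ 0 ∨ y.rk ≠ n) : Set.Icc x y ⊆ glueSide n b := by
  rintro z ⟨hxz, hzy⟩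
  simp only [glueSide, Set.mem_ofPred_eq, le_iff_s16] at *
  have := z.hle
  rcases hxz with rfl | hxz
  · exact hx
  rcases hzy with rfl | hzy
  · exact hy
  grind

theorem exists_Icc_subset_glueSide {x y : Glue n} (hlt : x < y) (hxy : x.rk ≠ 0 ∨ y.rk ≠ n) :
    ∃ b, Set.Icc x y ⊆ glueSide n b := by
  by_cases hx : x.rk = 0
  · exact ⟨y.copy, Icc_subset_glueSide (Or.inr (Or.inl hx)) (Or.inl rfl) hxy⟩
  · refine ⟨x.copy, Icc_subset_glueSide (Or.inl rfl) ?_ hxy⟩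
    rcases (lt_iff.1 hlt).2 with h | h | h
    exacts [Or.inl h.symm, absurd h hx, Or.inr (Or.inr h)]

end Glue

/-- For `n ≥ 4`, every interval of `P_n` of length at most 3 other than
`[0̂,1̂]` is an interval of one of the two butterfly subposets; in particular, if `τ` is
a triple assignment of `P_n`, then its restriction to either butterfly subposet
satisfies the hypothesis that every interval of rank at most 3 has a unique rising
chain. -/
theorem glue_small_intervals (n : ℕ) (hn : 4 ≤ n) :
    (∀ x y : Glue n, x < y → y.rk - x.rk ≤ 3 → ¬(x = ⊥ ∧ y = ⊤) →
      ∃ b : Bool, Set.Icc x y ⊆ glueSide n b) ∧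
    ∀ τ : Glue n → Glue n → Glue n → Bool, IsTripleAssignment τ →
      ∀ b : Bool, ∀ x y : ↥(glueSide n b), x < y → y.1.rk - x.1.rk ≤ 3 →
        ∃! l : List ↥(glueSide n b),
          SatChain x y l ∧ RisingOn (fun u v w => τ u.1 v.1 w.1) l := by
  refine ⟨fun x y hlt _ hbt => Glue.exists_Icc_subset_glueSide hlt ?_,
    fun τ hτ b x y hlt hrk => hτ.existsUnique_restrict hlt ?_⟩
  · by_contra! h
    exact hbt ⟨Glue.eq_bot_of_rk_eq_zero h.1, Glue.eq_top_of_rk_eq h.2⟩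
  · exact Glue.Icc_subset_glueSide x.2 y.2 (by omega)
end
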